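/- arXiv:math/0111170 — 7 statements merged into one kernel-verified Lean document; each statement's English description precedes it below -/
import Mathlib

section
/- For the synchronous dynamics with initial configuration σ⁰ distributed according to P_{1/2}: for every site x of ℍ and every n ≥ 1, the expected cardinality of the cluster of x at time n is infinite, i.e. E_{P_{1/2}}[|C_x(n)|] = ∞. -/
open MeasureTheory ENNReal

/-- Sites of the hexagonal (honeycomb) lattice ℍ, coordinatized by ℤ × ℤ. -/
abbrev Site : Type := ℤ × ℤ

/-- A spin configuration: `true` stands for spin +1, `false` for spin −1. -/
abbrev Config : Type := Site → Bool

/-- The three neighbors of a site: `(i,j)` is adjacent to `(i−1,j)`, `(i+1,j)`, and to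
`(i,j+1)` if `i+j` is even, to `(i,j−1)` if `i+j` is odd. -/
def nbrs (x : Site) : List Site :=
  [(x.1 - 1, x.2), (x.1 + 1, x.2),
   if Even (x.1 + x.2) then (x.1, x.2 + 1) else (x.1, x.2 - 1)]

/-- Adjacency in the hexagonal lattice. -/
def Adj (x y : Site) : Prop := y ∈ nbrs x

instance : DecidableRel Adj := fun x y => by unfold Adj; infer_instance

/-- The majority value among the three spins `σ y`, `y ∈ N(x)`. -/
def maj (σ : Config) (x : Site) : Bool :=
  decide (2 ≤ (nbrs x).countP (fun y => σ y))

/-- One step of the synchronous dynamics: at even times `n` all sites of the sublattice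
`A = {x : i+j odd}` are simultaneously updated to the majority value of their neighbors;
at odd times the sites of `B = {x : i+j even}` are updated. -/
def syncStep (n : ℕ) (σ : Config) : Config := fun x =>
  if (Even n ∧ ¬ Even (x.1 + x.2)) ∨ (¬ Even n ∧ Even (x.1 + x.2)) then maj σ x
  else σ x

/-- The synchronous dynamics: `evolve σ0 n` is the configuration σⁿ. -/
def evolve (σ0 : Config) : ℕ → Config
  | 0 => σ0
  | n + 1 => syncStep n (evolve σ0 n)

/-- `P` is the i.i.d. Bernoulli(λ) product measure on configurations:
a probability measure giving each finite cylinder its product probability,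
where each site is `+1` (i.e. `true`) with probability λ. -/
def IsBernoulliProduct (l : ℝ) (P : Measure Config) : Prop :=
  IsProbabilityMeasure P ∧
    ∀ (s : Finset Site) (f : Site → Bool),
      P {σ : Config | ∀ x ∈ s, σ x = f x} =
        ∏ x ∈ s, ENNReal.ofReal (if f x then l else 1 - l)

/-- The cluster of `x` in `σ`: the connected component of `x` in the subgraph of ℍ induced
by the sites carrying the same spin as `x`. -/
def cluster (σ : Config) (x : Site) : Set Site :=
  {y | Relation.ReflTransGen (fun a b => Adj a b ∧ σ b = σ x) x y}

/-- `σ` has an infinite cluster of spin `s` (`true` = +1, `false` = −1). -/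
def HasInfiniteCluster (σ : Config) (s : Bool) : Prop :=
  ∃ x, σ x = s ∧ (cluster σ x).Infinite


/-!
At time `n = K + 1` every site updated at step `K` carries the majority of its three neighbours,
which lie in the other sublattice and were not updated. The non-updated sublattice is a
triangular lattice in which two sites at distance two in ℍ always share an updated neighbour,
so a monochromatic path in that triangular lattice lifts to a path inside a cluster of `σⁿ`.

By the Y theorem, proved by iterated majority coarsening, every 2-colouring of a triangle of
size `2m` in the triangular lattice has a monochromatic cluster meeting all three sides; hence
one of the `2m + 1` points of a side starts a monochromatic arm of length `m`. The dynamics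
commutes with the parity-preserving translations and `P` is translation invariant, so a union
bound turns this deterministic fact into `P(C_x(n) reaches distance k) ≥ 1 / (18 (k + 1))`.
Summing over `k`, `E |C_x(n)|` dominates the harmonic series.
-/

theorem measurableSet_reflTransGen {Ω β : Type*} [MeasurableSpace Ω] [Countable β]
    {r : Ω → β → β → Prop} (hr : ∀ a b, MeasurableSet {ω | r ω a b}) (a b : β) :
    MeasurableSet {ω | Relation.ReflTransGen (r ω) a b} := by
  have hchain : ∀ l a, MeasurableSet {ω | List.IsChain (r ω) (a :: l)} := by
    intro l
    induction l with
    | nil => simp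
    | cons b l ih =>
      intro a
      simp only [List.isChain_cons_cons, Set.ofPred_and]
      exact (hr a b).inter (ih b)
  have hunion : {ω | Relation.ReflTransGen (r ω) a b} = ⋃ l : List β,
      {ω | List.IsChain (r ω) (a :: l)} ∩ {_ω | (a :: l).getLast (List.cons_ne_nil _ _) = b} := by
    ext ω
    simp only [Set.mem_iUnion, Set.mem_inter_iff, Set.mem_ofPred_eq]
    exact ⟨List.exists_isChain_cons_of_relationReflTransGen,
      fun ⟨l, h₁, h₂⟩ => List.relationReflTransGen_of_exists_isChain_cons l h₁ h₂⟩
  rw [hunion]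
  exact .iUnion fun l => (hchain l a).inter (.const _)

theorem sum_measure_le_lintegral_encard {Ω β : Type*} [MeasurableSpace Ω] (μ : Measure Ω)
    {C : Ω → Set β} (hC : ∀ y, MeasurableSet {ω | y ∈ C ω}) (F : Finset β) :
    ∑ y ∈ F, μ {ω | y ∈ C ω} ≤ ∫⁻ ω, ((C ω).encard : ℝ≥0∞) ∂μ := by
  classical
  calc ∑ y ∈ F, μ {ω | y ∈ C ω}
      = ∫⁻ ω, ∑ y ∈ F, {ω | y ∈ C ω}.indicator 1 ω ∂μ := by
        rw [lintegral_finsetSum _ fun y _ => measurable_one.indicator (hC y)]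
        simp only [lintegral_indicator_one (hC _)]
    _ ≤ _ := lintegral_mono fun ω => ?_
  have hsub : ((F.filter (· ∈ C ω) : Finset β) : Set β) ⊆ C ω := fun y hy =>
    (Finset.mem_filter.1 hy).2
  calc ∑ y ∈ F, {ω | y ∈ C ω}.indicator 1 ω = ((F.filter (· ∈ C ω)).card : ℝ≥0∞) := by
        simp [Set.indicator_apply, Finset.sum_boole]
    _ = (((F.filter (· ∈ C ω) : Set β).encard : ℕ∞) : ℝ≥0∞) := by
        rw [Set.encard_coe_eq_coe_finsetCard]; rfl
    _ ≤ _ := ENat.toENNReal_le.2 (Set.encard_le_encard hsub)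

theorem ENNReal.tsum_inv_natCast_mul_succ_eq_top (c : ℕ) :
    ∑' k : ℕ, ((c * (k + 1) : ℕ) : ℝ≥0∞)⁻¹ = ∞ := by
  have harmonic : ∑' k : ℕ, ((k + 1 : ℕ) : ℝ≥0∞)⁻¹ = ∞ := by
    have hcoe : ∀ k : ℕ, ((k + 1 : ℕ) : ℝ≥0∞)⁻¹ = (((k + 1 : ℕ) : NNReal)⁻¹ : NNReal) := fun k => by
      rw [ENNReal.coe_inv (Nat.cast_ne_zero.2 k.succ_ne_zero), ENNReal.coe_natCast]
    rw [tsum_congr hcoe, ENNReal.tsum_coe_eq_top_iff_not_summable_coe]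
    simpa only [NNReal.coe_inv, NNReal.coe_natCast] using
      mt (summable_nat_add_iff (f := fun n : ℕ => (n : ℝ)⁻¹) 1).1 Real.not_summable_natCast_inv
  have hsplit : ∀ k : ℕ,
      ((c * (k + 1) : ℕ) : ℝ≥0∞)⁻¹ = (c : ℝ≥0∞)⁻¹ * ((k + 1 : ℕ) : ℝ≥0∞)⁻¹ := fun k => by
    rw [Nat.cast_mul, ENNReal.mul_inv (.inr (ENNReal.natCast_ne_top _))
      (.inl (ENNReal.natCast_ne_top _))]
  rw [tsum_congr hsplit, ENNReal.tsum_mul_left, harmonic]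
  exact ENNReal.mul_top (ENNReal.inv_ne_zero.2 (ENNReal.natCast_ne_top c))

namespace Honeycomb

section TriangularLattice

variable {c : ℤ × ℤ → Bool} {s : Bool} {u v : ℤ × ℤ}

def triDirs : Finset (ℤ × ℤ) := {(1, 0), (-1, 0), (0, 1), (0, -1), (1, -1), (-1, 1)}

def TriAdj (u v : ℤ × ℤ) : Prop := v - u ∈ triDirs

theorem triAdj_iff :
    TriAdj u v ↔ u ≠ v ∧ |v.1 - u.1| ≤ 1 ∧ |v.2 - u.2| ≤ 1 ∧ |v.1 - u.1 + (v.2 - u.2)| ≤ 1 := by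
  simp only [TriAdj, triDirs, Finset.mem_insert, Finset.mem_singleton, Prod.ext_iff,
    Prod.fst_sub, Prod.snd_sub, ne_eq, abs_le]
  omega

def cell (u : ℤ × ℤ) : Finset (ℤ × ℤ) := {u, u + (1, 0), u + (0, 1)}

theorem triAdj_of_mem_cell {a b : ℤ × ℤ} (ha : a ∈ cell u) (hb : b ∈ cell u) (hab : a ≠ b) :
    TriAdj a b := by
  simp only [cell, Finset.mem_insert, Finset.mem_singleton, Prod.ext_iff, Prod.fst_add,
    Prod.snd_add] at ha hb
  rw [triAdj_iff]
  refine ⟨hab, ?_⟩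
  simp only [abs_le]; omega

theorem TriAdj.exists_cell_link (h : TriAdj u v) :
    ∃ w ∈ cell u, w ∈ cell v ∧ ∃ x ∈ cell u, ∃ y ∈ cell v, x ≠ w ∧ y ≠ w ∧ TriAdj x y := by
  obtain ⟨d, hd, rfl⟩ : ∃ d ∈ triDirs, v = u + d := ⟨v - u, h, by abel⟩
  simp only [triDirs, Finset.mem_insert, Finset.mem_singleton] at hd
  rcases hd with rfl | rfl | rfl | rfl | rfl | rfl <;>
  [refine ⟨u + (1, 0), ?_, ?_, u + (0, 1), ?_, u + (1, 1), ?_⟩;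
   refine ⟨u, ?_, ?_, u + (0, 1), ?_, u + (-1, 1), ?_⟩;
   refine ⟨u + (0, 1), ?_, ?_, u + (1, 0), ?_, u + (1, 1), ?_⟩;
   refine ⟨u, ?_, ?_, u + (1, 0), ?_, u + (1, -1), ?_⟩;
   refine ⟨u + (1, 0), ?_, ?_, u, ?_, u + (1, -1), ?_⟩;
   refine ⟨u + (0, 1), ?_, ?_, u, ?_, u + (-1, 1), ?_⟩]
  all_goals simp [cell, TriAdj, triDirs, Prod.ext_iff]

def TriConn (c : ℤ × ℤ → Bool) (s : Bool) : ℤ × ℤ → ℤ × ℤ → Prop :=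
  Relation.ReflTransGen fun p q => TriAdj p q ∧ c p = s ∧ c q = s

theorem TriConn.comp_add (h : TriConn c s u v) (a : ℤ × ℤ) :
    TriConn (fun p => c (p + a)) s (u - a) (v - a) :=
  h.lift (· - a) fun p q ⟨hpq, hp, hq⟩ => ⟨by simpa [TriAdj] using hpq, by simpa, by simpa⟩

theorem triConn_of_mem_cell {a b : ℤ × ℤ} (ha : a ∈ cell u) (hb : b ∈ cell u) (hca : c a = s)
    (hcb : c b = s) : TriConn c s a b := by
  obtain rfl | hab := eq_or_ne a b
  · exact .refl
  · exact .single ⟨triAdj_of_mem_cell ha hb hab, hca, hcb⟩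

def coarsen (c : ℤ × ℤ → Bool) (u : ℤ × ℤ) : Bool :=
  (c u && c (u + (1, 0))) || (c u && c (u + (0, 1))) || (c (u + (1, 0)) && c (u + (0, 1)))

theorem eq_or_eq_of_coarsen_eq {p q : ℤ × ℤ} (h : coarsen c u = s) (hp : p ∈ cell u)
    (hq : q ∈ cell u) (hpq : p ≠ q) : c p = s ∨ c q = s := by
  have majority : ∀ s t₁ t₂ t₃ : Bool, ((t₁ && t₂) || (t₁ && t₃) || (t₂ && t₃)) = s →
      (t₁ = s ∨ t₂ = s) ∧ (t₁ = s ∨ t₃ = s) ∧ (t₂ = s ∨ t₃ = s) := by decide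
  have := majority _ _ _ _ h
  simp only [cell, Finset.mem_insert, Finset.mem_singleton] at hp hq
  rcases hp with rfl | rfl | rfl <;> rcases hq with rfl | rfl | rfl <;> tauto

theorem TriAdj.exists_triConn_of_coarsen (h : TriAdj u v) (hu : coarsen c u = s)
    (hv : coarsen c v = s) : ∃ x ∈ cell u, ∃ y ∈ cell v, c x = s ∧ c y = s ∧ TriConn c s x y := by
  obtain ⟨w, hwu, hwv, x, hx, y, hy, hxw, hyw, hxy⟩ := h.exists_cell_link
  by_cases hw : c w = s
  · exact ⟨w, hwu, w, hwv, hw, hw, .refl⟩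
  · have hcx := (eq_or_eq_of_coarsen_eq hu hx hwu hxw).resolve_right hw
    have hcy := (eq_or_eq_of_coarsen_eq hv hy hwv hyw).resolve_right hw
    exact ⟨x, hx, y, hy, hcx, hcy, .single ⟨hxy, hcx, hcy⟩⟩

theorem TriConn.of_coarsen {a : ℤ × ℤ} (h : TriConn (coarsen c) s u v) (ha : a ∈ cell u)
    (hca : c a = s) : ∀ b ∈ cell v, c b = s → TriConn c s a b := by
  induction h with
  | refl => exact fun b hb hcb => triConn_of_mem_cell ha hb hca hcb
  | tail _ hstep ih =>
    intro b hb hcb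
    obtain ⟨x, hx, y, hy, hcx, hcy, hxy⟩ := hstep.1.exists_triConn_of_coarsen hstep.2.1 hstep.2.2
    exact ((ih x hx hcx).trans hxy).trans (triConn_of_mem_cell hy hb hcy hcb)

/-- The Y theorem for the triangle with corners `(0, 0)`, `(n, 0)`, `(0, n)`. A Y for
`coarsen c` in size `n` lifts to a Y for `c` in size `n + 1`: the cell of a boundary point has
two corners on the corresponding side of the larger triangle, and at most one corner of a cell
disagrees with its majority. -/
theorem exists_monochromatic_Y (n : ℕ) (c : ℤ × ℤ → Bool) :
    ∃ s, ∃ i j k : ℤ, 0 ≤ i ∧ i ≤ n ∧ 0 ≤ j ∧ j ≤ n ∧ 0 ≤ k ∧ k ≤ n ∧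
      c (0, i) = s ∧ c (j, 0) = s ∧ c (k, n - k) = s ∧
      TriConn c s (0, i) (j, 0) ∧ TriConn c s (0, i) (k, n - k) := by
  induction n generalizing c with
  | zero => exact ⟨c (0, 0), 0, 0, 0, by simp [TriConn, Relation.ReflTransGen.refl]⟩
  | succ n ih =>
    obtain ⟨s, i, j, k, hi₀, hin, hj₀, hjn, hk₀, hkn, hci, hcj, hck, hij, hik⟩ := ih (coarsen c)
    have cell_mem : ∀ {z p : ℤ × ℤ}, (p = z ∨ p = z + (1, 0) ∨ p = z + (0, 1)) → p ∈ cell z := by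
      simp [cell]
    obtain ⟨i', hi', hci'⟩ : ∃ i', (i' = i ∨ i' = i + 1) ∧ c (0, i') = s := by
      rcases eq_or_eq_of_coarsen_eq hci (cell_mem (.inl rfl)) (cell_mem (p := (0, i + 1)) (by simp))
        (by simp) with h | h
      exacts [⟨i, .inl rfl, h⟩, ⟨i + 1, .inr rfl, h⟩]
    obtain ⟨j', hj', hcj'⟩ : ∃ j', (j' = j ∨ j' = j + 1) ∧ c (j', 0) = s := by
      rcases eq_or_eq_of_coarsen_eq hcj (cell_mem (.inl rfl)) (cell_mem (p := (j + 1, 0)) (by simp))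
        (by simp) with h | h
      exacts [⟨j, .inl rfl, h⟩, ⟨j + 1, .inr rfl, h⟩]
    obtain ⟨k', hk', hck'⟩ : ∃ k', (k' = k ∨ k' = k + 1) ∧ c (k', (n + 1 : ℕ) - k') = s := by
      rcases eq_or_eq_of_coarsen_eq hck (cell_mem (p := (k, n - k + 1)) (by simp))
        (cell_mem (p := (k + 1, n - k)) (by simp)) (by simp) with h | h
      exacts [⟨k, .inl rfl, by convert h using 3; push_cast; ring⟩,
        ⟨k + 1, .inr rfl, by convert h using 3; push_cast; ring⟩]
    refine ⟨s, i', j', k', by omega, by omega, by omega, by omega, by omega, by omega,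
      hci', hcj', hck', hij.of_coarsen ?_ hci' _ ?_ hcj', hik.of_coarsen ?_ hci' _ ?_ hck'⟩ <;>
    simp [cell, Prod.ext_iff] <;> omega

def triNorm (u : ℤ × ℤ) : ℕ := max (max u.1.natAbs u.2.natAbs) (u.1 + u.2).natAbs

/-- The condition `c e = c 0` is what lets an updated site of ℍ join the arm: it then has two
neighbours of the arm's colour. -/
def HasArm (m : ℕ) (e : ℤ × ℤ) (c : ℤ × ℤ → Bool) : Prop :=
  c e = c 0 ∧ ∃ y, m ≤ triNorm y ∧ TriConn c (c 0) 0 y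

/-- Apply the Y theorem in size `2m`: from its corner on the side `{(0, q)}` one of the two other
corners is at distance at least `m`, and the first step of the path towards it gives `e`. -/
theorem exists_hasArm {m : ℕ} (hm : 0 < m) (c : ℤ × ℤ → Bool) :
    ∃ q ∈ Finset.range (2 * m + 1), ∃ e ∈ triDirs, HasArm m e fun u => c (u + (0, (q : ℤ))) := by
  obtain ⟨s, i, j, k, hi₀, hin, -, hjn, -, hkn, hci, -, -, hij, hik⟩ :=
    exists_monochromatic_Y (2 * m) c
  obtain ⟨z, hz, hfar⟩ : ∃ z, TriConn c s (0, i) z ∧ m ≤ triNorm (z - (0, i)) := by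
    by_cases hj : m ≤ triNorm ((j, 0) - (0, i))
    · exact ⟨_, hij, hj⟩
    · refine ⟨_, hik, ?_⟩
      simp only [triNorm, Prod.fst_sub, Prod.snd_sub] at hj ⊢
      omega
  obtain rfl | ⟨z', ⟨hz', hcs, hcz'⟩, -⟩ := Relation.ReflTransGen.cases_head hz
  · simp [triNorm] at hfar; omega
  refine ⟨i.toNat, by simp; omega, z' - (0, i), hz', ?_⟩
  rw [Int.toNat_of_nonneg hi₀]
  exact ⟨by simp [hcz', hcs], z - (0, i), hfar, by simpa [hcs] using hz.comp_add (0, i)⟩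

end TriangularLattice

theorem adj_iff {x y : Site} :
    Adj x y ↔ (y.2 = x.2 ∧ (y.1 = x.1 + 1 ∨ y.1 = x.1 - 1)) ∨
      (y.1 = x.1 ∧ y.2 = x.2 + 1 - 2 * ((x.1 + x.2) % 2)) := by
  simp only [Adj, nbrs, List.mem_cons, List.not_mem_nil, or_false, Int.even_iff]
  split_ifs <;> simp only [Prod.ext_iff] <;> omega

theorem Adj.symm {x y : Site} (h : Adj x y) : Adj y x := by
  rw [adj_iff] at h ⊢; omega

theorem Adj.parity_ne {x y : Site} (h : Adj x y) : (x.1 + x.2) % 2 ≠ (y.1 + y.2) % 2 := by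
  rw [adj_iff] at h; omega

theorem Adj.add {x y : Site} (h : Adj x y) {d : Site} (hd : (d.1 + d.2) % 2 = 0) :
    Adj (x + d) (y + d) := by
  rw [adj_iff] at h ⊢; simp only [Prod.fst_add, Prod.snd_add]; omega

theorem maj_eq_of_adj {σ : Config} {z a b : Site} {s : Bool} (ha : Adj z a) (hb : Adj z b)
    (hab : a ≠ b) (hsa : σ a = s) (hsb : σ b = s) : maj σ z = s := by
  have two_of_three : ∀ s t₁ t₂ t₃ : Bool,
      (t₁ = s ∧ t₂ = s) ∨ (t₁ = s ∧ t₃ = s) ∨ (t₂ = s ∧ t₃ = s) →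
      decide (2 ≤ [t₁, t₂, t₃].countP id) = s := by decide
  obtain ⟨n₁, n₂, n₃, hz⟩ : ∃ n₁ n₂ n₃, nbrs z = [n₁, n₂, n₃] := ⟨_, _, _, rfl⟩
  rw [Adj, hz] at ha hb
  rw [maj, hz]
  refine two_of_three s (σ n₁) (σ n₂) (σ n₃) ?_
  simp only [List.mem_cons, List.not_mem_nil, or_false] at ha hb
  rcases ha with rfl | rfl | rfl <;> rcases hb with rfl | rfl | rfl <;> simp_all

theorem maj_congr {σ τ : Config} {z : Site} (h : ∀ y, Adj z y → σ y = τ y) :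
    maj σ z = maj τ z := by
  unfold maj
  rw [List.countP_congr fun y hy => by rw [h y hy]]

/-- The sites of the parity class of `b` form a triangular lattice, which `toSite b` identifies
with `ℤ × ℤ`: `TriAdj` corresponds to distance two in ℍ. -/
def toSite (b : Site) (u : ℤ × ℤ) : Site := (b.1 + 2 * u.1 + u.2, b.2 + u.2)

theorem toSite_zero (b : Site) : toSite b 0 = b := by simp [toSite]

theorem toSite_injective (b : Site) : Function.Injective (toSite b) := by
  intro u v h
  simp only [toSite, Prod.ext_iff] at h ⊢
  omega

theorem parity_toSite (b : Site) (u : ℤ × ℤ) :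
    ((toSite b u).1 + (toSite b u).2) % 2 = (b.1 + b.2) % 2 := by
  simp only [toSite]; omega

theorem toSite_add_right (b d : Site) (u : ℤ × ℤ) : toSite b u + d = toSite (b + d) u := by
  simp only [toSite, Prod.ext_iff, Prod.fst_add, Prod.snd_add]; constructor <;> ring

theorem toSite_add_vertical (b : Site) (u : ℤ × ℤ) (q : ℤ) :
    toSite b (u + (0, q)) = toSite (b + (q, q)) u := by
  simp only [toSite, Prod.ext_iff, Prod.fst_add, Prod.snd_add]; constructor <;> ring

theorem TriAdj.exists_adj_toSite {u v : ℤ × ℤ} (h : TriAdj u v) (b : Site) :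
    ∃ z, Adj z (toSite b u) ∧ Adj z (toSite b v) := by
  set p := toSite b u
  obtain ⟨d, hd, rfl⟩ : ∃ d ∈ triDirs, v = u + d := ⟨v - u, h, by abel⟩
  have hq : toSite b (u + d) = (p.1 + 2 * d.1 + d.2, p.2 + d.2) := by
    simp only [p, toSite, Prod.fst_add, Prod.snd_add, Prod.ext_iff]; constructor <;> ring
  rw [hq]
  simp only [triDirs, Finset.mem_insert, Finset.mem_singleton] at hd
  have vert := Int.emod_two_eq_zero_or_one (p.1 + p.2)
  rcases hd with rfl | rfl | rfl | rfl | rfl | rfl <;> rcases vert with hv | hv <;>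
  [refine ⟨(p.1 + 1, p.2), ?_, ?_⟩; refine ⟨(p.1 + 1, p.2), ?_, ?_⟩;
   refine ⟨(p.1 - 1, p.2), ?_, ?_⟩; refine ⟨(p.1 - 1, p.2), ?_, ?_⟩;
   refine ⟨(p.1, p.2 + 1), ?_, ?_⟩; refine ⟨(p.1 + 1, p.2), ?_, ?_⟩;
   refine ⟨(p.1 - 1, p.2), ?_, ?_⟩; refine ⟨(p.1, p.2 - 1), ?_, ?_⟩;
   refine ⟨(p.1 + 1, p.2), ?_, ?_⟩; refine ⟨(p.1, p.2 - 1), ?_, ?_⟩;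
   refine ⟨(p.1, p.2 + 1), ?_, ?_⟩; refine ⟨(p.1 - 1, p.2), ?_, ?_⟩] <;>
  rw [adj_iff] <;> dsimp only <;> omega

/-- Translate the common neighbour given by `TriAdj.exists_adj_toSite` onto `x`. -/
theorem exists_adj_adj_toSite (x : Site) {e : ℤ × ℤ} (he : e ∈ triDirs) :
    ∃ p, Adj x p ∧ Adj x (toSite p e) := by
  set b : Site := (x.1 - 1, x.2)
  obtain ⟨z, hzb, hze⟩ := TriAdj.exists_adj_toSite (u := 0) (by simpa [TriAdj] using he) b
  have hd : ((x - z).1 + (x - z).2) % 2 = 0 := by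
    have := Adj.parity_ne hzb; simp only [toSite, b, Prod.fst_sub, Prod.snd_sub] at this ⊢; omega
  refine ⟨b + (x - z), by simpa [toSite] using Adj.add hzb hd, ?_⟩
  convert Adj.add hze hd using 1
  · abel
  · simp only [toSite, Prod.ext_iff, Prod.fst_add, Prod.snd_add]; constructor <;> ring

theorem eq_of_mem_cluster {σ : Config} {x y : Site} (h : y ∈ cluster σ x) : σ y = σ x := by
  induction h with
  | refl => rfl
  | tail _ hstep => exact hstep.2

theorem cluster_subset_of_mem {σ : Config} {x y : Site} (h : y ∈ cluster σ x) :
    cluster σ y ⊆ cluster σ x := fun _ hz =>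
  h.trans (by simpa only [cluster, Set.mem_ofPred_eq, eq_of_mem_cluster h] using hz)

theorem toSite_mem_cluster {w : Config} {b : Site}
    (hw : ∀ z u, Adj z (toSite b u) → w z = maj w z) {u v : ℤ × ℤ}
    (h : TriConn (fun u => w (toSite b u)) (w (toSite b u)) u v) :
    toSite b v ∈ cluster w (toSite b u) := by
  refine h.lift' (toSite b) fun p q ⟨hpq, hp, hq⟩ => ?_
  obtain ⟨z, hzp, hzq⟩ := hpq.exists_adj_toSite b
  have hne : toSite b p ≠ toSite b q := (toSite_injective b).ne (triAdj_iff.1 hpq).1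
  have hz : w z = w (toSite b u) := (hw z p hzp).trans (maj_eq_of_adj hzp hzq hne hp hq)
  exact .tail (.single ⟨Adj.symm hzp, hz⟩) ⟨hzq, hq⟩

def supDist (x y : Site) : ℕ := max (y.1 - x.1).natAbs (y.2 - x.2).natAbs

theorem triNorm_le_supDist (b : Site) (u : ℤ × ℤ) : triNorm u ≤ supDist b (toSite b u) := by
  simp only [triNorm, supDist, toSite]; omega

theorem exists_mem_cluster_of_hasArm {w : Config} {b : Site}
    (hw : ∀ z u, Adj z (toSite b u) → w z = maj w z) {m : ℕ} {e : ℤ × ℤ}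
    (h : HasArm m e fun u => w (toSite b u)) : ∃ y ∈ cluster w b, m ≤ supDist b y := by
  obtain ⟨-, y, hy, hconn⟩ := h
  refine ⟨toSite b y, ?_, hy.trans (triNorm_le_supDist b y)⟩
  simpa [toSite_zero] using toSite_mem_cluster hw hconn

theorem exists_mem_cluster_of_hasArm_of_adj {w : Config} {x p : Site} {e : ℤ × ℤ}
    (hx : w x = maj w x) (hp : Adj x p) (hpe : Adj x (toSite p e)) (he : e ∈ triDirs)
    (hw : ∀ z u, Adj z (toSite p u) → w z = maj w z) {m : ℕ}
    (h : HasArm m e fun u => w (toSite p u)) : ∃ y ∈ cluster w x, m ≤ supDist x y + 1 := by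
  have hpe' : p ≠ toSite p e := by
    have he₀ : (0 : ℤ × ℤ) ≠ e := by rintro rfl; simp [triDirs, Prod.ext_iff] at he
    simpa [toSite_zero] using (toSite_injective p).ne he₀
  have hwp : w p = w x := by
    rw [hx]; exact (maj_eq_of_adj hp hpe hpe' rfl (by simpa [toSite_zero] using h.1)).symm
  obtain ⟨y, hy, hfar⟩ := exists_mem_cluster_of_hasArm hw h
  refine ⟨y, cluster_subset_of_mem (.single ⟨hp, hwp⟩) hy, ?_⟩
  rw [adj_iff] at hp
  simp only [supDist] at hfar ⊢
  omega

theorem exists_mem_cluster_supDist_eq {w : Config} {x y : Site} (hy : y ∈ cluster w x) {k : ℕ}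
    (hk : k ≤ supDist x y) : ∃ z ∈ cluster w x, supDist x z = k := by
  induction hy with
  | refl => exact ⟨x, .refl, by simp [supDist] at hk ⊢; omega⟩
  | @tail a b hxa hab ih =>
    by_cases ha : k ≤ supDist x a
    · exact ih ha
    · refine ⟨b, hxa.tail hab, ?_⟩
      have := hab.1
      rw [adj_iff] at this
      simp only [supDist] at ha hk ⊢
      omega

noncomputable def shell (x : Site) (k : ℕ) : Finset Site :=
  (Finset.Icc (x.1 - k) (x.1 + k) ×ˢ Finset.Icc (x.2 - k) (x.2 + k)).filter (supDist x · = k)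

theorem mem_shell {x y : Site} {k : ℕ} : y ∈ shell x k ↔ supDist x y = k := by
  rw [shell, Finset.mem_filter, Finset.mem_product, Finset.mem_Icc, Finset.mem_Icc, supDist]
  omega

/-! A site `z` is updated at step `k` exactly when `(z.1 + z.2) % 2 ≠ k % 2`. -/

theorem syncStep_of_parity_ne {k : ℕ} {σ : Config} {z : Site}
    (h : (z.1 + z.2) % 2 ≠ (k : ℤ) % 2) : syncStep k σ z = maj σ z := by
  rw [syncStep, if_pos]
  simp only [Nat.even_iff, Int.even_iff]; omega

theorem syncStep_of_parity_eq {k : ℕ} {σ : Config} {z : Site}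
    (h : (z.1 + z.2) % 2 = (k : ℤ) % 2) : syncStep k σ z = σ z := by
  rw [syncStep, if_neg]
  simp only [Nat.even_iff, Int.even_iff]; omega

theorem evolve_succ_eq_maj {σ₀ : Config} {k : ℕ} {z : Site}
    (h : (z.1 + z.2) % 2 ≠ (k : ℤ) % 2) :
    evolve σ₀ (k + 1) z = maj (evolve σ₀ (k + 1)) z :=
  (syncStep_of_parity_ne h).trans <| maj_congr fun y hy =>
    (syncStep_of_parity_eq (by have := Adj.parity_ne hy; omega)).symm

def translate (d : Site) (σ : Config) : Config := fun z => σ (z + d)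

theorem nbrs_add {d : Site} (hd : (d.1 + d.2) % 2 = 0) (z : Site) :
    nbrs (z + d) = (nbrs z).map (· + d) := by
  have hpar : Even ((z + d).1 + (z + d).2) ↔ Even (z.1 + z.2) := by
    simp only [Prod.fst_add, Prod.snd_add, Int.even_iff]; omega
  unfold nbrs
  rw [if_congr hpar rfl rfl]
  split_ifs <;> simp only [List.map_cons, List.map_nil, List.cons.injEq, Prod.ext_iff,
    Prod.fst_add, Prod.snd_add, and_true, true_and] <;> omega

theorem maj_translate {d : Site} (hd : (d.1 + d.2) % 2 = 0) (σ : Config) (z : Site) :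
    maj (translate d σ) z = maj σ (z + d) := by
  rw [maj, maj, nbrs_add hd, List.countP_map]
  rfl

theorem evolve_translate {d : Site} (hd : (d.1 + d.2) % 2 = 0) (σ₀ : Config) (n : ℕ) :
    evolve (translate d σ₀) n = translate d (evolve σ₀ n) := by
  induction n with
  | zero => rfl
  | succ n ih =>
    funext z
    have hpar : ((z + d).1 + (z + d).2) % 2 = (z.1 + z.2) % 2 := by
      simp only [Prod.fst_add, Prod.snd_add]; omega
    change syncStep n _ z = syncStep n _ (z + d)
    by_cases h : (z.1 + z.2) % 2 = (n : ℤ) % 2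
    · rw [syncStep_of_parity_eq h, syncStep_of_parity_eq (hpar.trans h), ih]; rfl
    · rw [syncStep_of_parity_ne h, syncStep_of_parity_ne (hpar.trans_ne h), ih,
        maj_translate hd]

theorem measurable_translate (d : Site) : Measurable (translate d) :=
  measurable_pi_lambda _ fun z => measurable_pi_apply (z + d)

def translateEquiv (d : Site) : Config ≃ᵐ Config where
  toFun := translate d
  invFun := translate (-d)
  left_inv σ := by funext z; simp [translate]
  right_inv σ := by funext z; simp [translate]
  measurable_toFun := measurable_translate d
  measurable_invFun := measurable_translate (-d)

theorem _root_.IsBernoulliProduct.unique {l : ℝ} {P Q : Measure Config}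
    (hP : IsBernoulliProduct l P) (hQ : IsBernoulliProduct l Q) : P = Q := by
  have := hP.1
  refine IsProjectiveLimit.unique (P := fun J => P.map J.restrict) (fun _ => rfl) fun J => ?_
  refine Measure.ext_of_singleton fun f => ?_
  have hcyl : (J.restrict : Config → (J → Bool)) ⁻¹' {f} =
      {σ : Config | ∀ x ∈ J, σ x = if h : x ∈ J then f ⟨x, h⟩ else false} := by
    ext σ
    simp only [Set.mem_preimage, Set.mem_singleton_iff, funext_iff, Finset.restrict,
      Set.mem_ofPred_eq, Subtype.forall]
    exact forall₂_congr fun x hx => by rw [dif_pos hx]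
  rw [Measure.map_apply (Finset.measurable_restrict J) (measurableSet_singleton f),
    Measure.map_apply (Finset.measurable_restrict J) (measurableSet_singleton f), hcyl,
    hP.2, hQ.2]

theorem _root_.IsBernoulliProduct.map_translate {l : ℝ} {P : Measure Config}
    (hP : IsBernoulliProduct l P) (d : Site) : IsBernoulliProduct l (P.map (translate d)) := by
  have := hP.1
  refine ⟨Measure.isProbabilityMeasure_map (measurable_translate d).aemeasurable, fun s f => ?_⟩
  have hcyl : translate d ⁻¹' {σ | ∀ x ∈ s, σ x = f x} =
      {σ | ∀ y ∈ s.map (addRightEmbedding d), σ y = f (y - d)} := by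
    ext σ
    simp only [Set.mem_preimage, Set.mem_ofPred_eq, translate, Finset.forall_mem_map,
      addRightEmbedding_apply, add_sub_cancel_right]
  rw [show P.map (translate d) = P.map (translateEquiv d) from rfl, MeasurableEquiv.map_apply]
  rw [show ⇑(translateEquiv d) = translate d from rfl, hcyl, hP.2, Finset.prod_map]
  simp

theorem _root_.IsBernoulliProduct.measure_preimage_translate {l : ℝ} {P : Measure Config}
    (hP : IsBernoulliProduct l P) (d : Site) (A : Set Config) : P (translate d ⁻¹' A) = P A := by
  conv_rhs => rw [← (hP.map_translate d).unique hP]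
  exact ((translateEquiv d).map_apply A).symm

theorem measurable_maj (z : Site) : Measurable fun σ : Config => maj σ z := by
  have hcount : ∀ l : List Site, Measurable fun σ : Config => l.countP fun y => σ y := by
    intro l
    induction l with
    | nil => exact measurable_const
    | cons a l ih =>
      simp_rw [List.countP_cons]
      exact ih.add ((measurable_of_countable fun b : Bool => if b = true then 1 else 0).comp
        (measurable_pi_apply a))
  exact (measurable_of_countable fun n : ℕ => decide (2 ≤ n)).comp (hcount _)

theorem measurable_syncStep (k : ℕ) : Measurable (syncStep k) := by
  refine measurable_pi_lambda _ fun z => ?_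
  by_cases h : (z.1 + z.2) % 2 = (k : ℤ) % 2
  · simp_rw [syncStep_of_parity_eq h]; exact measurable_pi_apply z
  · simp_rw [syncStep_of_parity_ne h]; exact measurable_maj z

theorem measurable_evolve (n : ℕ) : Measurable fun σ₀ : Config => evolve σ₀ n := by
  induction n with
  | zero => exact measurable_id
  | succ n ih =>
    simp only [evolve]
    exact (measurable_syncStep n).comp ih

theorem measurableSet_mem_cluster (x y : Site) : MeasurableSet {σ : Config | y ∈ cluster σ x} :=
  measurableSet_reflTransGen (r := fun (σ : Config) a b => Adj a b ∧ σ b = σ x) (fun a b => by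
    simp only [Set.ofPred_and]
    exact (MeasurableSet.const _).inter
      (measurableSet_eq_fun (measurable_pi_apply b) (measurable_pi_apply x))) x y

def armEvent (n m : ℕ) (b : Site) (e : ℤ × ℤ) : Set Config :=
  {σ₀ | HasArm m e fun u => evolve σ₀ n (toSite b u)}

theorem armEvent_add {d : Site} (hd : (d.1 + d.2) % 2 = 0) (n m : ℕ) (b : Site) (e : ℤ × ℤ) :
    armEvent n m (b + d) e = translate d ⁻¹' armEvent n m b e := by
  ext σ₀
  simp only [armEvent, Set.mem_preimage, Set.mem_ofPred_eq, evolve_translate hd, translate,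
    toSite_add_right]

theorem univ_subset_iUnion_armEvent {m : ℕ} (hm : 0 < m) (n : ℕ) (b : Site) :
    Set.univ ⊆ ⋃ q ∈ Finset.range (2 * m + 1), ⋃ e ∈ triDirs,
      armEvent n m (b + ((q : ℤ), (q : ℤ))) e := by
  intro σ₀ _
  obtain ⟨q, hq, e, he, h⟩ := exists_hasArm hm fun u => evolve σ₀ n (toSite b u)
  simp only [Set.mem_iUnion]
  exact ⟨q, hq, e, he, by simpa only [armEvent, Set.mem_ofPred_eq, toSite_add_vertical] using h⟩

theorem one_le_mul_measure_of_armEvent_subset {P : Measure Config} [IsProbabilityMeasure P]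
    (hP : ∀ d A, P (translate d ⁻¹' A) = P A) {n m : ℕ} (hm : 0 < m) (b : Site)
    {R : Set Config}
    (hR : ∀ e ∈ triDirs, ∃ d : Site, (d.1 + d.2) % 2 = 0 ∧ armEvent n m (b + d) e ⊆ R) :
    1 ≤ ((2 * m + 1) * 6 : ℕ) * P R := by
  have htrans : ∀ d : Site, (d.1 + d.2) % 2 = 0 → ∀ e,
      P (armEvent n m (b + d) e) = P (armEvent n m b e) := fun d hd e => by
    rw [armEvent_add hd, hP]
  have hle : ∀ e ∈ triDirs, P (armEvent n m b e) ≤ P R := fun e he => by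
    obtain ⟨d, hd, hsub⟩ := hR e he
    exact (htrans d hd e).symm.le.trans (measure_mono hsub)
  calc (1 : ℝ≥0∞) = P Set.univ := measure_univ.symm
    _ ≤ ∑ q ∈ Finset.range (2 * m + 1), ∑ e ∈ triDirs,
          P (armEvent n m (b + ((q : ℤ), (q : ℤ))) e) :=
      (measure_mono (univ_subset_iUnion_armEvent hm n b)).trans <|
        (measure_biUnion_finset_le _ _).trans <|
          Finset.sum_le_sum fun q _ => measure_biUnion_finset_le _ _
    _ ≤ ∑ q ∈ Finset.range (2 * m + 1), ∑ e ∈ triDirs, P R :=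
      Finset.sum_le_sum fun q _ => Finset.sum_le_sum fun e he =>
        (htrans _ (by simp only; omega) e).trans_le (hle e he)
    _ = ((2 * m + 1) * 6 : ℕ) * P R := by
      simp only [Finset.sum_const, Finset.card_range, nsmul_eq_mul]
      rw [show triDirs.card = 6 from rfl]
      push_cast; ring

/-- If `x` is not updated at step `K`, arms based at `x` itself stay in its cluster. Otherwise
the two neighbours of `x` given by `exists_adj_adj_toSite` carry the colour of an arm in
direction `e`, so `x` takes that colour too. -/
theorem exists_armEvent_subset (x : Site) (K m : ℕ) :
    ∃ b : Site, ∀ e ∈ triDirs, ∃ d : Site, (d.1 + d.2) % 2 = 0 ∧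
      armEvent (K + 1) m (b + d) e ⊆
        {σ₀ | ∃ y ∈ cluster (evolve σ₀ (K + 1)) x, m ≤ supDist x y + 1} := by
  have stable : ∀ {b : Site}, (b.1 + b.2) % 2 = (K : ℤ) % 2 → ∀ σ₀ z u, Adj z (toSite b u) →
      evolve σ₀ (K + 1) z = maj (evolve σ₀ (K + 1)) z := fun hb σ₀ z u hz =>
    evolve_succ_eq_maj (by have := Adj.parity_ne hz; rw [parity_toSite] at this; omega)
  by_cases hx : (x.1 + x.2) % 2 = (K : ℤ) % 2
  · refine ⟨x, fun e _ => ⟨0, rfl, fun σ₀ h => ?_⟩⟩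
    rw [add_zero] at h
    obtain ⟨y, hy, hfar⟩ := exists_mem_cluster_of_hasArm (stable hx σ₀) h
    exact ⟨y, hy, by omega⟩
  · refine ⟨(x.1 - 1, x.2), fun e he => ?_⟩
    obtain ⟨p, hp, hpe⟩ := exists_adj_adj_toSite x he
    have hpK : (p.1 + p.2) % 2 = (K : ℤ) % 2 := by have := Adj.parity_ne hp; omega
    refine ⟨p - (x.1 - 1, x.2), by simp only [Prod.fst_sub, Prod.snd_sub]; omega,
      fun σ₀ h => ?_⟩
    rw [add_sub_cancel] at h
    exact exists_mem_cluster_of_hasArm_of_adj (evolve_succ_eq_maj hx) hp hpe he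
      (stable hpK σ₀) h

theorem inv_le_sum_measure_shell {l : ℝ} {P : Measure Config} (hP : IsBernoulliProduct l P)
    (x : Site) (K k : ℕ) :
    ((18 * (k + 1) : ℕ) : ℝ≥0∞)⁻¹ ≤
      ∑ y ∈ shell x k, P {σ₀ | y ∈ cluster (evolve σ₀ (K + 1)) x} := by
  have := hP.1
  obtain ⟨b, hb⟩ := exists_armEvent_subset x K (k + 1)
  have hreach : {σ₀ | ∃ y ∈ cluster (evolve σ₀ (K + 1)) x, k + 1 ≤ supDist x y + 1} ⊆
      ⋃ y ∈ shell x k, {σ₀ | y ∈ cluster (evolve σ₀ (K + 1)) x} := by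
    rintro σ₀ ⟨y, hy, hfar⟩
    obtain ⟨z, hz, hzk⟩ := exists_mem_cluster_supDist_eq hy (k := k) (by omega)
    exact Set.mem_biUnion (mem_shell.2 hzk) hz
  rw [ENNReal.inv_le_iff_le_mul (fun _ => by simp) (fun h => absurd h (ENNReal.natCast_ne_top _))]
  calc 1 ≤ ((2 * (k + 1) + 1) * 6 : ℕ) *
        P {σ₀ | ∃ y ∈ cluster (evolve σ₀ (K + 1)) x, k + 1 ≤ supDist x y + 1} :=
      one_le_mul_measure_of_armEvent_subset hP.measure_preimage_translate (by omega) b hb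
    _ ≤ ((18 * (k + 1) : ℕ) : ℝ≥0∞) *
        ∑ y ∈ shell x k, P {σ₀ | y ∈ cluster (evolve σ₀ (K + 1)) x} :=
      mul_le_mul' (Nat.cast_le.2 (by omega)) ((measure_mono hreach).trans
        (measure_biUnion_finset_le _ _))

theorem sum_measure_shell_le_lintegral (P : Measure Config) (x : Site) (n M : ℕ) :
    ∑ k ∈ Finset.range M, ∑ y ∈ shell x k, P {σ₀ | y ∈ cluster (evolve σ₀ n) x} ≤
      ∫⁻ σ₀, ((cluster (evolve σ₀ n) x).encard : ℝ≥0∞) ∂P := by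
  rw [← Finset.sum_biUnion fun i _ j _ hij => Finset.disjoint_left.2 fun y hi hj =>
    hij ((mem_shell.1 hi).symm.trans (mem_shell.1 hj))]
  exact sum_measure_le_lintegral_encard P
    (fun y => measurable_evolve n (measurableSet_mem_cluster x y)) _

end Honeycomb

/-- for σ⁰ ∼ P_{1/2}: for every site x and every n ≥ 1, the expected
cardinality (in ℕ ∪ {∞}) of the cluster of x at time n is infinite. -/
theorem stmt2 (P : Measure Config) (hP : IsBernoulliProduct (1 / 2) P)
    (x : Site) (n : ℕ) (hn : 1 ≤ n) :
    ∫⁻ σ0, ((cluster (evolve σ0 n) x).encard : ℝ≥0∞) ∂P = ⊤ := by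
  obtain ⟨K, rfl⟩ := Nat.exists_eq_add_of_le' hn
  refine top_unique ((ENNReal.tsum_inv_natCast_mul_succ_eq_top 18).symm.trans_le ?_)
  refine ENNReal.tsum_le_of_sum_range_le fun M => ?_
  exact (Finset.sum_le_sum fun k _ => Honeycomb.inv_le_sum_measure_shell hP x K k).trans
    (Honeycomb.sum_measure_shell_le_lintegral P x (K + 1) M)
end

section
/- In the zero-temperature majority dynamics on the hexagonal lattice ℍ: for every initial configuration σ ∈ {−1,+1}^ℍ, every legal flip sequence starting from σ, and every site x, the spin at x is flipped at most 8 times during the sequence. -/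
open MeasureTheory ENNReal

/-- Flipping the spin at site `x` is legal for the zero-temperature majority dynamics:
`σ x` disagrees with at least two of the three spins of the neighbors of `x`. -/
def LegalMaj (σ : Config) (x : Site) : Prop :=
  2 ≤ (nbrs x).countP (fun y => σ y != σ x)

/-- The configuration obtained from `σ` by flipping the spin at `x`. -/
def flipAt (σ : Config) (x : Site) : Config := Function.update σ x (!(σ x))

/-- `η 0, η 1, …` is a legal flip sequence of the majority dynamics, of length `m ∈ ℕ∞`
(`m = ⊤` for an infinite sequence): each configuration is obtained from the previous one by
flipping the spin at a single site where the flip is legal. -/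
def IsLegalFlipSeqMaj (η : ℕ → Config) (m : ℕ∞) : Prop :=
  ∀ n : ℕ, (n : ℕ∞) + 1 ≤ m → ∃ x, LegalMaj (η n) x ∧ η (n + 1) = flipAt (η n) x

/-! Move the site to the origin by a lattice automorphism. Let `E` be the fifteen edges of the
three hexagons containing the origin, let the energy be the number of disagreeing edges of `E`,
and let the potential be the energy plus one if the origin may flip; it lies between 0 and 16.
A legal flip at `y` turns at least two of the three edges at `y` from disagreeing into agreeing
and affects only those edges. The origin and its neighbours have all three edges in `E`, so a
flip there lowers the energy by at least one, which pays for the indicator; the other nine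
vertices of `E` have two edges in `E`, at least one of them disagreeing, so their flips do not
raise the energy and leave the indicator alone. A flip at the origin moreover makes the origin
stable, so it costs two, and there are at most eight of them. -/

section Potential

variable {P : ℕ → ℕ} {S : Set ℕ} {m : ℕ∞} {c : ℕ}

theorem add_mul_card_le_of_potential (hmono : ∀ n : ℕ, (n : ℕ∞) + 1 ≤ m → P (n + 1) ≤ P n)
    (hdrop : ∀ n ∈ S, P (n + 1) + c ≤ P n) {N : ℕ} (hN : (N : ℕ∞) ≤ m) {T : Finset ℕ}
    (hTS : ↑T ⊆ S) (hT : ∀ n ∈ T, n < N) : P N + c * T.card ≤ P 0 := by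
  induction N generalizing T with
  | zero => simp [Finset.eq_empty_of_forall_notMem fun n hn => (hT n hn).not_ge n.zero_le]
  | succ N ih =>
    have hN' : (N : ℕ∞) + 1 ≤ m := by exact_mod_cast hN
    have hrest := ih (le_trans le_self_add hN') (T := T.erase N)
      (fun n hn => hTS (Finset.mem_of_mem_erase hn))
      fun n hn => lt_of_le_of_ne (Nat.lt_succ_iff.1 (hT n (Finset.mem_of_mem_erase hn)))
        (Finset.ne_of_mem_erase hn)
    by_cases hNT : N ∈ T
    · have := hdrop N (hTS hNT)
      rw [← Finset.card_erase_add_one hNT, mul_add_one]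
      omega
    · rw [Finset.erase_eq_of_notMem hNT] at hrest
      have := hmono N hN'
      omega

theorem encard_le_of_potential {k : ℕ} (hS : ∀ n ∈ S, (n : ℕ∞) + 1 ≤ m)
    (hmono : ∀ n : ℕ, (n : ℕ∞) + 1 ≤ m → P (n + 1) ≤ P n)
    (hdrop : ∀ n ∈ S, P (n + 1) + c ≤ P n) (hP : P 0 < c * (k + 1)) :
    S.encard ≤ k := by
  by_contra! hk
  obtain ⟨t, htS, htk⟩ := Set.exists_subset_encard_eq (Order.add_one_le_of_lt hk)
  obtain ⟨T, rfl⟩ :=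
    (Set.finite_of_encard_eq_coe (k := k + 1) (by exact_mod_cast htk)).exists_finset_coe
  have hcard : T.card = k + 1 := by
    exact_mod_cast (Set.encard_coe_eq_coe_finsetCard T).symm.trans htk
  have hne : T.Nonempty := Finset.card_pos.1 (by omega)
  have := add_mul_card_le_of_potential hmono hdrop (N := T.max' hne + 1)
    (by exact_mod_cast hS _ (htS (T.max'_mem hne))) htS fun n hn => Nat.lt_succ_of_le (T.le_max' n hn)
  rw [hcard] at this
  omega

end Potential

theorem List.Subperm.le_countP {α : Type*} {l₁ l₂ : List α} (h : l₁.Subperm l₂) (p : α → Bool) :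
    l₂.countP p - (l₂.length - l₁.length) ≤ l₁.countP p := by
  obtain ⟨l, hl, hsub⟩ := h
  rw [← hl.countP_eq, ← hl.length_eq]
  exact hsub.le_countP p

instance (σ : Config) (x : Site) : Decidable (LegalMaj σ x) := by unfold LegalMaj; infer_instance

theorem self_notMem_nbrs (x : Site) : x ∉ nbrs x := by
  unfold nbrs; split_ifs <;> simp [Prod.ext_iff] <;> omega

theorem flipAt_self (σ : Config) (x : Site) : flipAt σ x x = !σ x := Function.update_self ..

theorem flipAt_of_ne (σ : Config) {x y : Site} (h : y ≠ x) : flipAt σ x y = σ y :=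
  Function.update_of_ne h ..

theorem legalMaj_flipAt_iff_of_not_adj {σ : Config} {x y : Site} (hxy : y ≠ x)
    (hy : y ∉ nbrs x) : LegalMaj (flipAt σ y) x ↔ LegalMaj σ x := by
  unfold LegalMaj
  rw [flipAt_of_ne σ hxy.symm, List.countP_congr fun z hz => by
    rw [flipAt_of_ne σ (ne_of_mem_of_not_mem hz hy)]]

theorem not_legalMaj_flipAt_self {σ : Config} {x : Site} (h : LegalMaj σ x) :
    ¬ LegalMaj (flipAt σ x) x := by
  unfold LegalMaj at *
  have hcompl : (nbrs x).countP (fun z => flipAt σ x z != flipAt σ x x)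
      = (nbrs x).countP (fun z => !(σ z != σ x)) :=
    List.countP_congr fun z hz => by
      rw [flipAt_self, flipAt_of_ne σ (ne_of_mem_of_not_mem hz (self_notMem_nbrs x))]
      cases σ z <;> cases σ x <;> rfl
  have htotal := List.length_eq_countP_add_countP (fun z => σ z != σ x) (l := nbrs x)
  have hlen : (nbrs x).length = 3 := rfl
  simp only [Bool.not_eq_true, Bool.decide_eq_false] at htotal
  omega

def energy (E : List (Site × Site)) (σ : Config) : ℕ := E.countP fun e => σ e.1 != σ e.2

def edgeNbrs (E : List (Site × Site)) (y : Site) : List Site :=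
  E.filterMap fun e => if e.1 = y then some e.2 else if e.2 = y then some e.1 else none

def endpoints (E : List (Site × Site)) : List Site := E.flatMap fun e => [e.1, e.2]

theorem edgeNbrs_eq_nil {E : List (Site × Site)} {y : Site} (hy : y ∉ endpoints E) :
    edgeNbrs E y = [] := by
  rw [edgeNbrs, List.filterMap_eq_nil_iff]
  rintro ⟨a, b⟩ hab
  have ha : a ≠ y := by rintro rfl; exact hy (List.mem_flatMap.2 ⟨_, hab, by simp⟩)
  have hb : b ≠ y := by rintro rfl; exact hy (List.mem_flatMap.2 ⟨_, hab, by simp⟩)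
  simp [ha, hb]

theorem energy_flipAt_add (E : List (Site × Site)) (hE : ∀ e ∈ E, e.1 ≠ e.2) (σ : Config)
    (y : Site) :
    energy E (flipAt σ y) + 2 * (edgeNbrs E y).countP (fun z => σ z != σ y)
      = energy E σ + (edgeNbrs E y).length := by
  induction E with
  | nil => rfl
  | cons e E ih =>
    obtain ⟨a, b⟩ := e
    have hab : a ≠ b := hE _ List.mem_cons_self
    have ih := ih fun e he => hE e (List.mem_cons_of_mem _ he)
    simp only [energy, edgeNbrs, List.countP_cons, List.filterMap_cons] at ih ⊢
    by_cases ha : a = y <;> by_cases hb : b = y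
    · exact absurd (ha.trans hb.symm) hab
    · subst ha
      simp only [if_true, List.countP_cons, List.length_cons, flipAt_self, flipAt_of_ne σ hb]
      generalize σ a = u at ih ⊢
      generalize σ b = v at ih ⊢
      cases u <;> cases v <;>
        simp only [Bool.bne_false, Bool.bne_true, Bool.not_false, Bool.not_true, bne_self_eq_false,
          Bool.false_eq_true, ↓reduceIte, add_zero] at ih ⊢ <;> omega
    · subst hb
      simp only [if_neg ha, if_true, List.countP_cons, List.length_cons, flipAt_self,
        flipAt_of_ne σ ha]
      generalize σ a = u at ih ⊢
      generalize σ b = v at ih ⊢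
      cases u <;> cases v <;>
        simp only [Bool.bne_false, Bool.bne_true, Bool.not_false, Bool.not_true, bne_self_eq_false,
          Bool.false_eq_true, ↓reduceIte, add_zero] at ih ⊢ <;> omega
    · simp only [if_neg ha, if_neg hb, flipAt_of_ne σ ha, flipAt_of_ne σ hb]
      omega

theorem energy_flipAt_add_length_le {E : List (Site × Site)} (hE : ∀ e ∈ E, e.1 ≠ e.2)
    {σ : Config} {y : Site} (h : LegalMaj σ y) (hy : (edgeNbrs E y).Subperm (nbrs y)) :
    energy E (flipAt σ y) + (edgeNbrs E y).length ≤ energy E σ + 2 := by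
  have hflip := energy_flipAt_add E hE σ y
  have hcount := hy.le_countP fun z => σ z != σ y
  have hlen : (nbrs y).length = 3 := rfl
  have := hy.length_le
  unfold LegalMaj at h
  omega

def originHexagonEdges : List (Site × Site) :=
  [((0,0), (-1,0)), ((0,0), (1,0)), ((0,0), (0,1)),
   ((1,0), (1,-1)), ((1,-1), (0,-1)), ((0,-1), (-1,-1)), ((-1,-1), (-1,0)),
   ((1,0), (2,0)), ((2,0), (2,1)), ((2,1), (1,1)), ((1,1), (0,1)),
   ((0,1), (-1,1)), ((-1,1), (-2,1)), ((-2,1), (-2,0)), ((-2,0), (-1,0))]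

theorem originHexagonEdges_ne : ∀ e ∈ originHexagonEdges, e.1 ≠ e.2 := by decide

theorem edgeNbrs_originHexagonEdges_subperm :
    ∀ y ∈ endpoints originHexagonEdges, (edgeNbrs originHexagonEdges y).Subperm (nbrs y) := by
  decide

theorem two_le_length_edgeNbrs_originHexagonEdges :
    ∀ y ∈ endpoints originHexagonEdges, 2 ≤ (edgeNbrs originHexagonEdges y).length := by
  decide

theorem mem_endpoints_originHexagonEdges :
    ∀ y ∈ (0 : Site) :: nbrs 0, y ∈ endpoints originHexagonEdges := by
  decide

theorem length_edgeNbrs_originHexagonEdges_eq_three :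
    ∀ y ∈ (0 : Site) :: nbrs 0, (edgeNbrs originHexagonEdges y).length = 3 := by
  decide

def originPotential (σ : Config) : ℕ :=
  energy originHexagonEdges σ + if LegalMaj σ 0 then 1 else 0

theorem originPotential_le (σ : Config) : originPotential σ ≤ 16 := by
  have : energy originHexagonEdges σ ≤ 15 := List.countP_le_length
  unfold originPotential
  split_ifs <;> omega

theorem originPotential_flipAt_origin_add_two_le {σ : Config} (h : LegalMaj σ 0) :
    originPotential (flipAt σ 0) + 2 ≤ originPotential σ := by
  have h₀ : (0 : Site) ∈ (0 : Site) :: nbrs 0 := List.mem_cons_self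
  have := length_edgeNbrs_originHexagonEdges_eq_three 0 h₀
  have := energy_flipAt_add_length_le originHexagonEdges_ne h
    (edgeNbrs_originHexagonEdges_subperm 0 (mem_endpoints_originHexagonEdges 0 h₀))
  unfold originPotential
  rw [if_pos h, if_neg (not_legalMaj_flipAt_self h)]
  omega

theorem originPotential_flipAt_le {σ : Config} {y : Site} (h : LegalMaj σ y) :
    originPotential (flipAt σ y) ≤ originPotential σ := by
  unfold originPotential
  by_cases hy₀ : y ∈ (0 : Site) :: nbrs 0
  · have := length_edgeNbrs_originHexagonEdges_eq_three y hy₀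
    have := energy_flipAt_add_length_le originHexagonEdges_ne h
      (edgeNbrs_originHexagonEdges_subperm y (mem_endpoints_originHexagonEdges y hy₀))
    split_ifs <;> omega
  · have henergy : energy originHexagonEdges (flipAt σ y) ≤ energy originHexagonEdges σ := by
      by_cases hy : y ∈ endpoints originHexagonEdges
      · have := two_le_length_edgeNbrs_originHexagonEdges y hy
        have := energy_flipAt_add_length_le originHexagonEdges_ne h
          (edgeNbrs_originHexagonEdges_subperm y hy)
        omega
      · have := energy_flipAt_add originHexagonEdges originHexagonEdges_ne σ y
        rw [edgeNbrs_eq_nil hy] at this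
        simpa using this.le
    rw [List.mem_cons, not_or] at hy₀
    simp only [legalMaj_flipAt_iff_of_not_adj hy₀.1 hy₀.2]
    omega

/-- A translation by an odd `x` exchanges the two parity classes, whose vertical edges point in
opposite directions; composing with the reflection `j ↦ -j` repairs this. -/
def recenter (x : Site) : Site ≃ Site where
  toFun v := if Even (x.1 + x.2) then (v.1 - x.1, v.2 - x.2) else (v.1 - x.1, x.2 - v.2)
  invFun u := if Even (x.1 + x.2) then (u.1 + x.1, u.2 + x.2) else (u.1 + x.1, x.2 - u.2)
  left_inv v := by dsimp only; split_ifs <;> simp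
  right_inv u := by dsimp only; split_ifs <;> simp

theorem recenter_symm_zero (x : Site) : (recenter x).symm 0 = x := by
  simp only [recenter, Equiv.coe_fn_symm_mk]; split_ifs <;> simp

theorem nbrs_recenter (x v : Site) : nbrs (recenter x v) = (nbrs v).map (recenter x) := by
  simp only [nbrs, recenter, Equiv.coe_fn_mk]
  split_ifs <;> simp_all [Int.even_iff, Prod.ext_iff] <;> omega

section Automorphism

variable {e : Site ≃ Site} {σ : Config} {y : Site}

theorem legalMaj_comp_symm (he : ∀ v, nbrs (e v) = (nbrs v).map e) (h : LegalMaj σ y) :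
    LegalMaj (σ ∘ e.symm) (e y) := by
  unfold LegalMaj at *
  rw [he, List.countP_map]
  simpa [Function.comp_def] using h

theorem flipAt_comp_symm (e : Site ≃ Site) (σ : Config) (y : Site) :
    flipAt σ y ∘ e.symm = flipAt (σ ∘ e.symm) (e y) := by
  rw [flipAt, Function.update_comp_equiv, Equiv.symm_symm, flipAt, Function.comp_apply,
    Equiv.symm_apply_apply]

theorem IsLegalFlipSeqMaj.comp_symm {η : ℕ → Config} {m : ℕ∞}
    (he : ∀ v, nbrs (e v) = (nbrs v).map e) (h : IsLegalFlipSeqMaj η m) :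
    IsLegalFlipSeqMaj (fun n => η n ∘ e.symm) m := fun n hn => by
  obtain ⟨y, hy, hη⟩ := h n hn
  exact ⟨e y, legalMaj_comp_symm he hy, by simp only [hη, flipAt_comp_symm]⟩

end Automorphism

theorem encard_flips_origin_le (η : ℕ → Config) (m : ℕ∞) (hseq : IsLegalFlipSeqMaj η m) :
    {n : ℕ | (n : ℕ∞) + 1 ≤ m ∧ η (n + 1) 0 ≠ η n 0}.encard ≤ 8 := by
  refine encard_le_of_potential (P := fun n => originPotential (η n)) (c := 2)
    (fun n hn => hn.1) (fun n hn => ?_) (fun n ⟨hn, hflip⟩ => ?_)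
    ((originPotential_le (η 0)).trans_lt (by norm_num))
  · obtain ⟨y, hy, hη⟩ := hseq n hn
    rw [hη]
    exact originPotential_flipAt_le hy
  · obtain ⟨y, hy, hη⟩ := hseq n hn
    obtain rfl : y = 0 := by
      by_contra hy₀
      exact hflip (by rw [hη, flipAt_of_ne _ (Ne.symm hy₀)])
    rw [hη]
    exact originPotential_flipAt_origin_add_two_le hy

theorem stmt4_general (η : ℕ → Config) (m : ℕ∞)
    (hseq : IsLegalFlipSeqMaj η m) (x : Site) :
    {n : ℕ | (n : ℕ∞) + 1 ≤ m ∧ η (n + 1) x ≠ η n x}.encard ≤ 8 := by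
  simpa [recenter_symm_zero] using
    encard_flips_origin_le _ m (hseq.comp_symm (nbrs_recenter x))

/-- in the zero-temperature majority dynamics on ℍ, in every legal flip
sequence (finite or infinite, starting from an arbitrary initial configuration `σ = η 0`),
every site is flipped at most 8 times. -/
theorem stmt4 (σ : Config) (η : ℕ → Config) (m : ℕ∞) (h0 : η 0 = σ)
    (hseq : IsLegalFlipSeqMaj η m) (x : Site) :
    {n : ℕ | (n : ℕ∞) + 1 ≤ m ∧ η (n + 1) x ≠ η n x}.encard ≤ 8 :=
  stmt4_general η m hseq x
end

section
/- Fix a site x of the hexagonal lattice ℍ, let A_x be the union of the vertex sets of the three hexagonal cells (6-cycles of ℍ) containing x, and let E_{A_x} be the set of edges of ℍ with both endpoints in A_x (so |E_{A_x}| = 15). For a configuration σ define the internal energy e(σ) = − Σ_{{y,z} ∈ E_{A_x}} σ_y σ_z (so −15 ≤ e(σ) ≤ 15). If σ′ is obtained from σ by a single legal flip of the majority dynamics at any site w, then e(σ′) ≤ e(σ); moreover, if w ∈ {x} ∪ N(x), then e(σ′) ≤ e(σ) − 2. -/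
open MeasureTheory ENNReal

/-- The spin value of a site as an integer: `true` ↦ +1, `false` ↦ −1. -/
def ival (b : Bool) : ℤ := if b then 1 else -1

/-- The offsets (relative to a site of even parity) of the 13 sites forming the union of
the vertex sets of the three hexagonal cells of ℍ containing that site. -/
def evenOffsets : List Site :=
  [(0, 0), (1, 0), (2, 0), (2, 1), (1, 1), (0, 1), (-2, 0), (-1, 0), (-1, 1), (-2, 1),
   (1, -1), (0, -1), (-1, -1)]

/-- `hexA x` is the union of the vertex sets of the three hexagonal cells (6-cycles of ℍ)
containing `x`. -/
def hexA (x : Site) : Finset Site :=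
  ((if Even (x.1 + x.2) then evenOffsets
    else evenOffsets.map (fun p => (p.1, -p.2))).map
      (fun p => (x.1 + p.1, x.2 + p.2))).toFinset

/-- `hexEdges x` is the set of edges of ℍ with both endpoints in `hexA x`, each edge
recorded once as an ordered pair with lexicographically smaller endpoint first. -/
def hexEdges (x : Site) : Finset (Site × Site) :=
  (hexA x ×ˢ hexA x).filter
    (fun p => Adj p.1 p.2 ∧ (p.1.1 < p.2.1 ∨ (p.1.1 = p.2.1 ∧ p.1.2 < p.2.2)))

/-- The internal energy of `A_x`:  e(σ) = − Σ_{{y,z} ∈ E_{A_x}} σ_y σ_z. -/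
def internalEnergy (x : Site) (σ : Config) : ℤ :=
  - ∑ p ∈ hexEdges x, ival (σ p.1) * ival (σ p.2)

/-!
Flipping `w` changes `e` by `2 ∑ σ_w σ_y`, summed over the neighbours `y` of `w` with
`{w, y} ∈ E_{A_x}`. If the flip is legal, at most one neighbour of `w` agrees with `σ_w`, so if
`w` has degree `d` in the graph `(A_x, E_{A_x})` the change is at most `2 (2 - d)`, and it is `0`
when `d = 0`. In that graph no vertex has degree 1, and `x` and its neighbours have degree 3.
These facts and `|E_{A_x}| = 15` are checked by computation at `x = (0,0)` and `x = (1,0)`, and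
carried to every `x` by the translations by vectors `t` with `t.1 + t.2` even, which are
automorphisms of ℍ.
-/

lemma adj_comm (a b : Site) : Adj a b ↔ Adj b a := by
  simp only [Adj, nbrs, List.mem_cons, List.not_mem_nil, or_false, Prod.ext_iff]
  split_ifs <;> simp only [Int.even_iff] at * <;> omega

lemma fst_ne_snd_of_mem_hexEdges {x : Site} {p : Site × Site} (hp : p ∈ hexEdges x) :
    p.1 ≠ p.2 := by
  simp only [hexEdges, Finset.mem_filter] at hp
  intro h
  rw [h] at hp
  omega

lemma even_add_add_iff {a t : Site} (ht : Even (t.1 + t.2)) :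
    Even ((a + t).1 + (a + t).2) ↔ Even (a.1 + a.2) := by
  rw [Int.even_iff] at ht
  simp only [Prod.fst_add, Prod.snd_add, Int.even_iff]
  omega

lemma nbrs_add {t : Site} (ht : Even (t.1 + t.2)) (a : Site) :
    nbrs (a + t) = (nbrs a).map (· + t) := by
  simp only [nbrs, even_add_add_iff ht, List.map_cons, List.map_nil]
  split_ifs <;> simp only [Prod.ext_iff, Prod.fst_add, Prod.snd_add, List.cons.injEq, and_true,
    true_and] <;> refine ⟨?_, ?_, ?_⟩ <;> ring

lemma adj_add_iff {t : Site} (ht : Even (t.1 + t.2)) (a b : Site) :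
    Adj (a + t) (b + t) ↔ Adj a b := by
  rw [Adj, Adj, nbrs_add ht, List.mem_map_of_injective (add_left_injective t)]

lemma hexA_add {t : Site} (ht : Even (t.1 + t.2)) (x : Site) :
    hexA (x + t) = (hexA x).image (· + t) := by
  simp only [hexA, even_add_add_iff ht, List.toFinset, Finset.image_toFinset, Multiset.map_coe,
    List.map_map]
  congr 3
  funext p
  simp only [Function.comp, Prod.ext_iff, Prod.fst_add, Prod.snd_add]
  omega

lemma hexEdges_add {t : Site} (ht : Even (t.1 + t.2)) (x : Site) :
    hexEdges (x + t) = (hexEdges x).image (Prod.map (· + t) (· + t)) := by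
  rw [hexEdges, hexEdges, hexA_add ht, ← Finset.prodMap_image_product, Finset.filter_image]
  congr 1
  refine Finset.filter_congr fun p _ => ?_
  simp only [Prod.map_fst, Prod.map_snd, adj_add_iff ht, Prod.fst_add, Prod.snd_add]
  exact and_congr_right fun _ => by omega

def hexEdgesAt (x w : Site) : Finset (Site × Site) :=
  (hexEdges x).filter fun p => p.1 = w ∨ p.2 = w

def hexDegree (x w : Site) : ℕ := (hexEdgesAt x w).card

lemma hexDegree_add {t : Site} (ht : Even (t.1 + t.2)) (x w : Site) :
    hexDegree (x + t) (w + t) = hexDegree x w := by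
  rw [hexDegree, hexDegree, hexEdgesAt, hexEdgesAt, hexEdges_add ht, Finset.filter_image,
    Finset.card_image_of_injective _
      (Prod.map_injective.2 ⟨add_left_injective t, add_left_injective t⟩)]
  exact congrArg Finset.card (Finset.filter_congr fun p _ => by
    simp only [Prod.map_fst, Prod.map_snd, (add_left_injective t).eq_iff])

lemma hexDegree_eq_zero_of_notMem {x w : Site} (hw : w ∉ hexA x) : hexDegree x w = 0 := by
  refine Finset.card_eq_zero.2 (Finset.filter_eq_empty_iff.2 fun p hp => ?_)
  simp only [hexEdges, Finset.mem_filter, Finset.mem_product] at hp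
  rintro (rfl | rfl)
  exacts [hw hp.1.1, hw hp.1.2]

abbrev baseSites : List Site := [(0, 0), (1, 0)]

lemma exists_mem_baseSites_add (x : Site) :
    ∃ b ∈ baseSites, ∃ t : Site, Even (t.1 + t.2) ∧ x = b + t := by
  rcases Int.even_or_odd (x.1 + x.2) with h | h
  · exact ⟨(0, 0), by simp, x, h, by simp⟩
  · refine ⟨(1, 0), by simp, (x.1 - 1, x.2), ?_, by ext <;> simp⟩
    rw [Int.odd_iff] at h
    rw [Int.even_iff]
    omega

lemma card_hexEdges_of_mem_baseSites : ∀ b ∈ baseSites, (hexEdges b).card = 15 := by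
  decide

lemma hexDegree_ne_one_of_mem_baseSites : ∀ b ∈ baseSites, ∀ w ∈ hexA b, hexDegree b w ≠ 1 := by
  decide

lemma hexDegree_eq_three_of_mem_baseSites :
    ∀ b ∈ baseSites, ∀ w ∈ b :: nbrs b, hexDegree b w = 3 := by
  decide

lemma card_hexEdges (x : Site) : (hexEdges x).card = 15 := by
  obtain ⟨b, hb, t, ht, rfl⟩ := exists_mem_baseSites_add x
  rw [hexEdges_add ht, Finset.card_image_of_injective _
    (Prod.map_injective.2 ⟨add_left_injective t, add_left_injective t⟩)]
  exact card_hexEdges_of_mem_baseSites b hb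

lemma hexDegree_ne_one (x w : Site) : hexDegree x w ≠ 1 := by
  by_cases hw : w ∈ hexA x
  · obtain ⟨b, hb, t, ht, rfl⟩ := exists_mem_baseSites_add x
    rw [hexA_add ht, Finset.mem_image] at hw
    obtain ⟨w, hw, rfl⟩ := hw
    rw [hexDegree_add ht]
    exact hexDegree_ne_one_of_mem_baseSites b hb w hw
  · rw [hexDegree_eq_zero_of_notMem hw]
    exact zero_ne_one

lemma hexDegree_eq_three {x w : Site} (hw : w ∈ x :: nbrs x) : hexDegree x w = 3 := by
  obtain ⟨b, hb, t, ht, rfl⟩ := exists_mem_baseSites_add x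
  have hw' : w ∈ (b :: nbrs b).map (· + t) := by rwa [List.map_cons, ← nbrs_add ht]
  obtain ⟨w, hw₀, rfl⟩ := List.mem_map.1 hw'
  rw [hexDegree_add ht]
  exact hexDegree_eq_three_of_mem_baseSites b hb w hw₀

lemma ival_mul_ival (b c : Bool) : ival b * ival c = if b = c then 1 else -1 := by
  cases b <;> cases c <;> rfl

lemma abs_internalEnergy_le (x : Site) (σ : Config) : |internalEnergy x σ| ≤ 15 := by
  calc |internalEnergy x σ| ≤ ∑ p ∈ hexEdges x, |ival (σ p.1) * ival (σ p.2)| := by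
        rw [internalEnergy, abs_neg]
        exact Finset.abs_sum_le_sum_abs _ _
    _ = 15 := by simp [ival_mul_ival, apply_ite, card_hexEdges]

lemma ival_not (b : Bool) : ival (!b) = -ival b := by
  cases b <;> rfl

lemma ival_flipAt_mul_ival_flipAt (σ : Config) {a b : Site} (hab : a ≠ b) (w : Site) :
    ival (flipAt σ w a) * ival (flipAt σ w b) =
      ival (σ a) * ival (σ b) - 2 * if a = w ∨ b = w then ival (σ a) * ival (σ b) else 0 := by
  by_cases ha : a = w
  · subst ha
    simp only [flipAt, Function.update_self, ival_not, Function.update_of_ne hab.symm, neg_mul,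
      true_or, ↓reduceIte]
    ring
  by_cases hb : b = w
  · subst hb
    simp only [flipAt, Function.update_of_ne hab, Function.update_self, ival_not, mul_neg, or_true,
      ↓reduceIte]
    ring
  simp [flipAt, ha, hb]

lemma internalEnergy_flipAt (x : Site) (σ : Config) (w : Site) :
    internalEnergy x (flipAt σ w) =
      internalEnergy x σ + 2 * ∑ p ∈ hexEdgesAt x w, ival (σ p.1) * ival (σ p.2) := by
  simp only [internalEnergy, hexEdgesAt, Finset.sum_filter, Finset.mul_sum]
  rw [Finset.sum_congr rfl fun p hp =>
    ival_flipAt_mul_ival_flipAt σ (fst_ne_snd_of_mem_hexEdges hp) w, Finset.sum_sub_distrib]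
  ring

lemma card_filter_agree_le_one {σ : Config} {w : Site} (hl : LegalMaj σ w) :
    ((nbrs w).toFinset.filter fun y => σ w = σ y).card ≤ 1 := by
  have hsplit := List.length_eq_countP_add_countP (fun y => σ y != σ w) (l := nbrs w)
  have hagree : (nbrs w).countP (fun y => σ w = σ y) =
      (nbrs w).countP (fun y => decide ¬(σ y != σ w) = true) :=
    List.countP_congr fun y _ => by cases σ w <;> cases σ y <;> decide
  have hlen : (nbrs w).length = 3 := rfl
  calc _ = ((nbrs w).filter fun y => σ w = σ y).toFinset.card := by simp [List.toFinset_filter]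
    _ ≤ ((nbrs w).filter fun y => σ w = σ y).length := List.toFinset_card_le _
    _ ≤ 1 := by rw [← List.countP_eq_length_filter]; unfold LegalMaj at hl; omega

lemma sum_ival_mul_ival_le_of_legalMaj {σ : Config} {w : Site} (hl : LegalMaj σ w)
    {S : Finset Site} (hS : S ⊆ (nbrs w).toFinset) :
    ∑ y ∈ S, ival (σ w) * ival (σ y) ≤ 2 - S.card := by
  have hagree : (S.filter fun y => σ w = σ y).card ≤ 1 :=
    (Finset.card_le_card (Finset.filter_subset_filter _ hS)).trans (card_filter_agree_le_one hl)
  have hcard := Finset.card_filter_add_card_filter_not (s := S) fun y => σ w = σ y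
  simp only [ival_mul_ival, Finset.sum_ite, Finset.sum_const, nsmul_eq_mul, mul_one, mul_neg]
  omega

def otherEnd (w : Site) (p : Site × Site) : Site := if p.1 = w then p.2 else p.1

lemma mem_hexEdgesAt_cases {x w : Site} {p : Site × Site} (hp : p ∈ hexEdgesAt x w) :
    p.1 = w ∧ otherEnd w p = p.2 ∨ p.2 = w ∧ otherEnd w p = p.1 := by
  by_cases h : p.1 = w
  · exact Or.inl ⟨h, if_pos h⟩
  · exact Or.inr ⟨((Finset.mem_filter.1 hp).2.resolve_left h), if_neg h⟩

lemma otherEnd_mem_nbrs {x w : Site} {p : Site × Site} (hp : p ∈ hexEdgesAt x w) :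
    otherEnd w p ∈ nbrs w := by
  have hadj : Adj p.1 p.2 := ((Finset.mem_filter.1 (Finset.mem_filter.1 hp).1).2).1
  rcases mem_hexEdgesAt_cases hp with ⟨h1, h2⟩ | ⟨h1, h2⟩
  · rwa [h2, ← h1]
  · rw [h2, ← h1]
    exact (adj_comm _ _).1 hadj

lemma injOn_otherEnd (x w : Site) : Set.InjOn (otherEnd w) (hexEdgesAt x w) := by
  intro p hp q hq hpq
  have lex (r : Site × Site) (hr : r ∈ hexEdgesAt x w) :
      r.1.1 < r.2.1 ∨ (r.1.1 = r.2.1 ∧ r.1.2 < r.2.2) :=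
    ((Finset.mem_filter.1 (Finset.mem_filter.1 hr).1).2).2
  have hlp := lex p hp
  have hlq := lex q hq
  rcases mem_hexEdgesAt_cases hp with ⟨hp1, hp2⟩ | ⟨hp1, hp2⟩ <;>
    rcases mem_hexEdgesAt_cases hq with ⟨hq1, hq2⟩ | ⟨hq1, hq2⟩ <;>
    simp only [Prod.ext_iff] at * <;> omega

lemma sum_hexEdgesAt_le {σ : Config} {w : Site} (hl : LegalMaj σ w) (x : Site) :
    ∑ p ∈ hexEdgesAt x w, ival (σ p.1) * ival (σ p.2) ≤ 2 - hexDegree x w := by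
  have hsum : ∑ p ∈ hexEdgesAt x w, ival (σ p.1) * ival (σ p.2) =
      ∑ y ∈ (hexEdgesAt x w).image (otherEnd w), ival (σ w) * ival (σ y) := by
    rw [Finset.sum_image (injOn_otherEnd x w)]
    refine Finset.sum_congr rfl fun p hp => ?_
    rcases mem_hexEdgesAt_cases hp with ⟨h1, h2⟩ | ⟨h1, h2⟩ <;> rw [h1, h2]
    exact mul_comm _ _
  rw [hsum, hexDegree, ← Finset.card_image_of_injOn (injOn_otherEnd x w)]
  refine sum_ival_mul_ival_le_of_legalMaj hl fun y hy => ?_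
  obtain ⟨p, hp, rfl⟩ := Finset.mem_image.1 hy
  exact List.mem_toFinset.2 (otherEnd_mem_nbrs hp)

/-- `E_{A_x}` has exactly 15 edges, `−15 ≤ e(σ) ≤ 15`, a single legal flip of
the majority dynamics at any site `w` never increases the internal energy of `A_x`, and if
`w ∈ {x} ∪ N(x)` it decreases it by at least 2. -/
theorem stmt6 (x : Site) (σ : Config) :
    (hexEdges x).card = 15 ∧
    (-15 ≤ internalEnergy x σ ∧ internalEnergy x σ ≤ 15) ∧
    ∀ w : Site, LegalMaj σ w →
      internalEnergy x (flipAt σ w) ≤ internalEnergy x σ ∧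
      ((w = x ∨ w ∈ nbrs x) →
        internalEnergy x (flipAt σ w) ≤ internalEnergy x σ - 2) := by
  refine ⟨card_hexEdges x, abs_le.1 (abs_internalEnergy_le x σ), fun w hl => ?_⟩
  have hflip := internalEnergy_flipAt x σ w
  have hsum := sum_hexEdgesAt_le hl x
  refine ⟨?_, fun hw => ?_⟩
  · rcases Nat.eq_zero_or_pos (hexDegree x w) with h0 | hpos
    · rw [hflip, Finset.card_eq_zero.1 h0, Finset.sum_empty]
      omega
    · have := hexDegree_ne_one x w
      omega
  · have := hexDegree_eq_three (List.mem_cons.2 hw)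
    omega
end

section
/- Let γ be either a cycle in the hexagonal lattice ℍ or a doubly-infinite self-avoiding path in ℍ, and let σ be a configuration assigning the same spin value to all vertices of γ. Then in any legal flip sequence of the majority dynamics starting from σ, no vertex of γ is ever flipped; in particular every configuration in the sequence assigns that common value to all vertices of γ. -/
/-!
A flip at `x` is legal only if at most one neighbour of `x` agrees with it. Every vertex of a
cycle or of a bi-infinite path has two distinct neighbours on it, so while the path is
monochromatic none of its vertices can flip, and flips elsewhere leave it monochromatic.
-/

open MeasureTheory ENNReal

/-- `S` is the vertex set of a cycle in ℍ: the range of an injective cyclic sequence of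
`n ≥ 3` sites with consecutive sites adjacent. -/
def IsCycleSet (S : Set Site) : Prop :=
  ∃ n : ℕ, 3 ≤ n ∧ ∃ c : ZMod n → Site,
    Function.Injective c ∧ (∀ i, Adj (c i) (c (i + 1))) ∧ S = Set.range c

/-- `S` is the vertex set of a doubly-infinite self-avoiding path in ℍ. -/
def IsBiInfinitePathSet (S : Set Site) : Prop :=
  ∃ p : ℤ → Site, Function.Injective p ∧ (∀ k, Adj (p k) (p (k + 1))) ∧ S = Set.range p

lemma adj_symm {x y : Site} (h : Adj x y) : Adj y x := by
  obtain ⟨i, j⟩ := x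
  obtain ⟨a, b⟩ := y
  simp only [Adj, nbrs, List.mem_cons, List.not_mem_nil, or_false, Prod.ext_iff] at h ⊢
  split_ifs at h ⊢ <;> simp only [Int.even_iff] at * <;> omega

lemma List.two_le_countP_of_mem_of_ne {α : Type*} [DecidableEq α] {l : List α}
    {p : α → Bool} {a b : α} (ha : a ∈ l) (hb : b ∈ l) (hab : a ≠ b) (hpa : p a)
    (hpb : p b) : 2 ≤ l.countP p := by
  have hsub : ({a, b} : Finset α) ⊆ (l.filter p).toFinset := by
    simp [Finset.insert_subset_iff, ha, hb, hpa, hpb]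
  calc 2 = ({a, b} : Finset α).card := (Finset.card_pair hab).symm
    _ ≤ (l.filter p).toFinset.card := Finset.card_le_card hsub
    _ ≤ (l.filter p).length := List.toFinset_card_le _
    _ = l.countP p := List.countP_eq_length_filter.symm

lemma not_legalMaj_of_two_adj_agree (σ : Config) {v a b : Site} (hab : a ≠ b)
    (ha : Adj v a) (hb : Adj v b) (hσa : σ a = σ v) (hσb : σ b = σ v) :
    ¬ LegalMaj σ v := by
  set p : Site → Bool := fun y => σ y != σ v
  have hagree : 2 ≤ (nbrs v).countP (fun y => ¬ p y) :=
    List.two_le_countP_of_mem_of_ne ha hb hab (by simp [p, hσa]) (by simp [p, hσb])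
  have hlen := List.length_eq_countP_add_countP p (l := nbrs v)
  have hlen3 : (nbrs v).length = 3 := rfl
  change ¬ 2 ≤ (nbrs v).countP p
  omega

def HasTwoAdjWithin (S : Set Site) : Prop :=
  ∀ v ∈ S, ∃ a ∈ S, ∃ b ∈ S, a ≠ b ∧ Adj v a ∧ Adj v b

lemma hasTwoAdjWithin_range {G : Type*} [AddCommGroupWithOne G] (c : G → Site)
    (hc : Function.Injective c) (hadj : ∀ i, Adj (c i) (c (i + 1))) (h2 : (2 : G) ≠ 0) :
    HasTwoAdjWithin (Set.range c) := by
  rintro _ ⟨i, rfl⟩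
  refine ⟨c (i + 1), ⟨_, rfl⟩, c (i - 1), ⟨_, rfl⟩, fun h => h2 ?_, hadj i, ?_⟩
  · have := sub_eq_zero.mpr (hc h)
    rwa [add_sub_sub_cancel, one_add_one_eq_two] at this
  · simpa using adj_symm (hadj (i - 1))

lemma IsCycleSet.hasTwoAdjWithin {S : Set Site} (hS : IsCycleSet S) : HasTwoAdjWithin S := by
  obtain ⟨n, hn, c, hc, hadj, rfl⟩ := hS
  refine hasTwoAdjWithin_range c hc hadj ?_
  rw [← Nat.cast_ofNat, Ne, ZMod.natCast_eq_zero_iff]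
  exact fun hdvd => by have := Nat.le_of_dvd two_pos hdvd; omega

lemma IsBiInfinitePathSet.hasTwoAdjWithin {S : Set Site} (hS : IsBiInfinitePathSet S) :
    HasTwoAdjWithin S := by
  obtain ⟨p, hp, hadj, rfl⟩ := hS
  exact hasTwoAdjWithin_range p hp hadj two_ne_zero

lemma HasTwoAdjWithin.flipAt_eq {S : Set Site} (hS : HasTwoAdjWithin S) {σ : Config}
    {s : Bool} (hσ : ∀ v ∈ S, σ v = s) {x : Site} (hx : LegalMaj σ x) :
    ∀ v ∈ S, flipAt σ x v = s := by
  intro v hv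
  have hxS : x ∉ S := fun hxS => by
    obtain ⟨a, haS, b, hbS, hab, ha, hb⟩ := hS x hxS
    exact not_legalMaj_of_two_adj_agree σ hab ha hb (by rw [hσ a haS, hσ x hxS])
      (by rw [hσ b hbS, hσ x hxS]) hx
  rw [flipAt, Function.update_of_ne (by rintro rfl; exact hxS hv)]
  exact hσ v hv

lemma IsLegalFlipSeqMaj.invariant {η : ℕ → Config} {m : ℕ∞} (hseq : IsLegalFlipSeqMaj η m)
    {P : Config → Prop} (h0 : P (η 0)) (hP : ∀ σ x, P σ → LegalMaj σ x → P (flipAt σ x)) :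
    ∀ n : ℕ, (n : ℕ∞) ≤ m → P (η n) := by
  intro n
  induction n with
  | zero => exact fun _ => h0
  | succ n ih =>
    intro hn
    rw [Nat.cast_succ] at hn
    obtain ⟨x, hx, hflip⟩ := hseq n hn
    rw [hflip]
    exact hP _ x (ih (le_trans le_self_add hn)) hx

/-- if γ is a cycle of ℍ or a doubly-infinite self-avoiding path in ℍ and the
initial configuration gives all its vertices the common spin value `s`, then along any legal
flip sequence of the majority dynamics no vertex of γ is ever flipped: every configuration in
the sequence assigns the value `s` to all vertices of γ. -/
theorem stmt7 (S : Set Site) (hS : IsCycleSet S ∨ IsBiInfinitePathSet S)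
    (s : Bool) (σ : Config) (hσ : ∀ v ∈ S, σ v = s)
    (η : ℕ → Config) (m : ℕ∞) (h0 : η 0 = σ) (hseq : IsLegalFlipSeqMaj η m) :
    ∀ n : ℕ, (n : ℕ∞) ≤ m → ∀ v ∈ S, η n v = s := by
  have hS' : HasTwoAdjWithin S := hS.elim IsCycleSet.hasTwoAdjWithin
    IsBiInfinitePathSet.hasTwoAdjWithin
  exact hseq.invariant (P := fun τ => ∀ v ∈ S, τ v = s) (h0 ▸ hσ)
    fun _ _ hτ hx => hS'.flipAt_eq hτ hx
end

section
/- Under the synchronous dynamics on the hexagonal lattice ℍ, for every initial configuration σ⁰ and every site x of the sublattice B, x flips at most once during the whole evolution; i.e. there is at most one n ∈ ℕ with σ^{n+1}_x ≠ σⁿ_x. -/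
set_option linter.unreachableTactic false
set_option linter.unusedTactic false


open MeasureTheory ENNReal

/-! ### Auxiliary lemmas -/

lemma maj_eq_of_two {σ : Config} {x w1 w2 : Site} (h1 : w1 ∈ nbrs x) (h2 : w2 ∈ nbrs x)
    (hne : w1 ≠ w2) {v : Bool} (e1 : σ w1 = v) (e2 : σ w2 = v) : maj σ x = v := by
  simp only [nbrs, List.mem_cons, List.not_mem_nil, or_false] at h1 h2
  rcases h1 with h1 | h1 | h1 <;> rcases h2 with h2 | h2 | h2 <;>
    subst h1 <;> first
      | exact absurd rfl (h2 ▸ hne)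
      | (subst h2
         cases hA : σ (x.1 - 1, x.2) <;>
         cases hB : σ (x.1 + 1, x.2) <;>
         cases hC : σ (if Even (x.1 + x.2) then (x.1, x.2 + 1) else (x.1, x.2 - 1)) <;>
         simp only [maj, nbrs, List.countP_cons, List.countP_nil, hA, hB, hC] at * <;>
         subst e1 <;> first | rfl | (exact absurd e2 (by decide)) | decide | simp_all)

lemma maj_other {σ : Config} {x z w : Site} (hz : z ∈ nbrs x) (hw : w ∈ nbrs x)
    (hne : w ≠ z) (h : σ z ≠ maj σ x) : σ w = maj σ x := by
  simp only [nbrs, List.mem_cons, List.not_mem_nil, or_false] at hz hw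
  rcases hz with h1 | h1 | h1 <;> rcases hw with h2 | h2 | h2 <;>
    subst h1 <;> first
      | exact absurd rfl (h2 ▸ hne)
      | (subst h2
         revert h
         cases hA : σ (x.1 - 1, x.2) <;>
         cases hB : σ (x.1 + 1, x.2) <;>
         cases hC : σ (if Even (x.1 + x.2) then (x.1, x.2 + 1) else (x.1, x.2 - 1)) <;>
         simp only [maj, nbrs, List.countP_cons, List.countP_nil, hA, hB, hC] <;>
         decide)

lemma memL (x : Site) : (x.1 - 1, x.2) ∈ nbrs x := by simp [nbrs]
lemma memR (x : Site) : (x.1 + 1, x.2) ∈ nbrs x := by simp [nbrs]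
lemma memT (x : Site) : (if Even (x.1 + x.2) then (x.1, x.2 + 1) else (x.1, x.2 - 1)) ∈ nbrs x := by
  simp [nbrs]

lemma exists_two (σ : Config) (x : Site) :
    ∃ w1 w2, w1 ∈ nbrs x ∧ w2 ∈ nbrs x ∧ w1 ≠ w2 ∧ σ w1 = maj σ x ∧ σ w2 = maj σ x := by
  set A := ((x.1 - 1, x.2) : Site) with hA
  set B := ((x.1 + 1, x.2) : Site) with hB
  set C := (if Even (x.1 + x.2) then ((x.1, x.2 + 1) : Site) else (x.1, x.2 - 1)) with hC
  have hAB : A ≠ B := by simp [hA, hB, Prod.ext_iff]; omega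
  have hAC : A ≠ C := by
    by_cases hp : Even (x.1 + x.2) <;> simp [hA, hC, hp, Prod.ext_iff] <;> omega
  have hBC : B ≠ C := by
    by_cases hp : Even (x.1 + x.2) <;> simp [hB, hC, hp, Prod.ext_iff] <;> omega
  by_cases h1 : σ A = σ B
  · have hm : maj σ x = σ A := maj_eq_of_two (memL x) (memR x) hAB rfl h1.symm
    exact ⟨A, B, memL x, memR x, hAB, hm.symm, by rw [hm, h1]⟩
  · by_cases h2 : σ C = σ A
    · exact ⟨A, C, memL x, memT x, hAC, by rw [maj_eq_of_two (memL x) (memT x) hAC rfl h2],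
        by rw [maj_eq_of_two (memL x) (memT x) hAC rfl h2, h2]⟩
    · have h3 : σ C = σ B := by
        cases hb : σ B <;> cases hc : σ C <;> cases ha : σ A <;> simp_all
      exact ⟨B, C, memR x, memT x, hBC, by rw [maj_eq_of_two (memR x) (memT x) hBC rfl h3],
        by rw [maj_eq_of_two (memR x) (memT x) hBC rfl h3, h3]⟩

lemma maj_congr {σ σ' : Config} {y : Site} (h : ∀ w ∈ nbrs y, σ w = σ' w) :
    maj σ y = maj σ' y := by
  have h1 := h _ (memL y); have h2 := h _ (memR y); have h3 := h _ (memT y)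
  simp only [maj, nbrs, List.countP_cons, List.countP_nil, h1, h2, h3]

lemma nbrs_parity {y w : Site} (h : w ∈ nbrs y) : Even (w.1 + w.2) ↔ ¬ Even (y.1 + y.2) := by
  obtain ⟨p, q⟩ := y
  by_cases hp : Even (p + q) <;>
    simp only [nbrs, hp, List.mem_cons, List.not_mem_nil, or_false,
      if_true, if_false] at h ⊢ <;>
    rcases h with h | h | h <;> subst h <;>
    simp only [Int.even_iff, not_true, not_false_iff, iff_false, iff_true] at hp ⊢ <;> omega

lemma evolve_succ (σ0 : Config) (n : ℕ) : evolve σ0 (n + 1) = syncStep n (evolve σ0 n) := rfl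

lemma step_upd {σ0 : Config} {n : ℕ} {x : Site}
    (h : (Even n ∧ ¬ Even (x.1 + x.2)) ∨ (¬ Even n ∧ Even (x.1 + x.2))) :
    evolve σ0 (n + 1) x = maj (evolve σ0 n) x := by
  rw [evolve_succ]; unfold syncStep; rw [if_pos h]

lemma step_noupd {σ0 : Config} {n : ℕ} {x : Site}
    (h : ¬ ((Even n ∧ ¬ Even (x.1 + x.2)) ∨ (¬ Even n ∧ Even (x.1 + x.2)))) :
    evolve σ0 (n + 1) x = evolve σ0 n x := by
  rw [evolve_succ]; unfold syncStep; rw [if_neg h]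

/-- At odd times, every site of the odd sublattice agrees with the majority of its
(current) neighbors. -/
lemma Ffact {σ0 : Config} {m : ℕ} (hm : Even m) {y : Site} (hy : ¬ Even (y.1 + y.2)) :
    evolve σ0 (m + 1) y = maj (evolve σ0 (m + 1)) y := by
  rw [step_upd (Or.inl ⟨hm, hy⟩)]
  exact maj_congr fun w hw => (step_noupd (by
    have := (nbrs_parity hw).mpr hy
    tauto)).symm

/-- A finite set of sites in which every site has two distinct same-valued neighbors inside
the set keeps its values forever. -/
lemma freeze (σ0 : Config) (S : List Site) (v : Bool) (t : ℕ)
    (hsup : ∀ z ∈ S, ∃ w1 w2, w1 ∈ nbrs z ∧ w2 ∈ nbrs z ∧ w1 ≠ w2 ∧ w1 ∈ S ∧ w2 ∈ S)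
    (hval : ∀ z ∈ S, evolve σ0 t z = v) :
    ∀ d, ∀ z ∈ S, evolve σ0 (t + d) z = v := by
  intro d
  induction d with
  | zero => simpa using hval
  | succ d ih =>
    intro z hz
    have ht : t + (d + 1) = (t + d) + 1 := rfl
    rw [ht]
    by_cases h : (Even (t + d) ∧ ¬ Even (z.1 + z.2)) ∨ (¬ Even (t + d) ∧ Even (z.1 + z.2))
    · rw [step_upd h]
      obtain ⟨w1, w2, m1, m2, hne, s1, s2⟩ := hsup z hz
      exact maj_eq_of_two m1 m2 hne (ih w1 s1) (ih w2 s2)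
    · rw [step_noupd h]; exact ih z hz

/-- The generic hexagon argument. -/
lemma hexcase (σ0 : Config) (k : ℕ) (hk : ¬ Even k)
    (z y1 y2 a b c : Site) (v : Bool)
    (hA1 : ¬ Even (y1.1 + y1.2)) (hA2 : ¬ Even (y2.1 + y2.2)) (hAc : ¬ Even (c.1 + c.2))
    (hBa : Even (a.1 + a.2)) (hBb : Even (b.1 + b.2))
    (h1 : y1 ∈ nbrs z) (h2 : y2 ∈ nbrs z) (h12 : y1 ≠ y2)
    (hz1 : z ∈ nbrs y1) (ha1 : a ∈ nbrs y1) (haz : a ≠ z)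
    (hz2 : z ∈ nbrs y2) (hb2 : b ∈ nbrs y2) (hbz : b ≠ z)
    (hac : a ∈ nbrs c) (hbc : b ∈ nbrs c) (hab : a ≠ b)
    (hy1a : y1 ∈ nbrs a) (hca : c ∈ nbrs a) (hy1c : y1 ≠ c)
    (hy2b : y2 ∈ nbrs b) (hcb : c ∈ nbrs b) (hy2c : y2 ≠ c)
    (hσz : evolve σ0 k z = !v)
    (hv1 : evolve σ0 k y1 = v) (hv2 : evolve σ0 k y2 = v)
    (hτz : evolve σ0 (k + 1) z = v) :
    ∀ d, evolve σ0 (k + 1 + d) z = v := by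
  have hk0 : k ≠ 0 := fun h => hk (h ▸ Even.zero)
  obtain ⟨m, rfl⟩ : ∃ m, k = m + 1 := ⟨k - 1, by omega⟩
  have hm : Even m := by rwa [Nat.even_add_one, not_not] at hk
  have hnv : (!v) ≠ v := by cases v <;> simp
  have F : ∀ y : Site, ¬ Even (y.1 + y.2) →
      evolve σ0 (m + 1) y = maj (evolve σ0 (m + 1)) y := fun y hy => Ffact hm hy
  have hmaj1 : maj (evolve σ0 (m + 1)) y1 = v := (F y1 hA1).symm.trans hv1
  have hmaj2 : maj (evolve σ0 (m + 1)) y2 = v := (F y2 hA2).symm.trans hv2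
  have fa : evolve σ0 (m + 1) a = v :=
    (maj_other hz1 ha1 haz (by rw [hσz, hmaj1]; exact hnv)).trans hmaj1
  have fb : evolve σ0 (m + 1) b = v :=
    (maj_other hz2 hb2 hbz (by rw [hσz, hmaj2]; exact hnv)).trans hmaj2
  have fc : evolve σ0 (m + 1) c = v :=
    (F c hAc).trans (maj_eq_of_two hac hbc hab fa fb)
  have hk' : ¬ Even (m + 1) := hk
  have noupdA : ∀ y : Site, ¬ Even (y.1 + y.2) →
      evolve σ0 (m + 1 + 1) y = evolve σ0 (m + 1) y := fun y hy =>
    step_noupd (by rintro (⟨h, _⟩ | ⟨_, h⟩); exact hk' h; exact hy h)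
  have ty1 : evolve σ0 (m + 1 + 1) y1 = v := (noupdA y1 hA1).trans hv1
  have ty2 : evolve σ0 (m + 1 + 1) y2 = v := (noupdA y2 hA2).trans hv2
  have tc : evolve σ0 (m + 1 + 1) c = v := (noupdA c hAc).trans fc
  have ta : evolve σ0 (m + 1 + 1) a = v := by
    rw [step_upd (Or.inr ⟨hk', hBa⟩)]; exact maj_eq_of_two hy1a hca hy1c hv1 fc
  have tb : evolve σ0 (m + 1 + 1) b = v := by
    rw [step_upd (Or.inr ⟨hk', hBb⟩)]; exact maj_eq_of_two hy2b hcb hy2c hv2 fc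
  have hfr := freeze σ0 [z, y1, y2, a, b, c] v (m + 1 + 1)
    (by
      intro w hw
      simp only [List.mem_cons, List.not_mem_nil, or_false] at hw
      rcases hw with rfl | rfl | rfl | rfl | rfl | rfl
      · exact ⟨y1, y2, h1, h2, h12, by simp, by simp⟩
      · exact ⟨z, a, hz1, ha1, Ne.symm haz, by simp, by simp⟩
      · exact ⟨z, b, hz2, hb2, Ne.symm hbz, by simp, by simp⟩
      · exact ⟨y1, c, hy1a, hca, hy1c, by simp, by simp⟩
      · exact ⟨y2, c, hy2b, hcb, hy2c, by simp, by simp⟩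
      · exact ⟨a, b, hac, hbc, hab, by simp, by simp⟩)
    (by
      intro w hw
      simp only [List.mem_cons, List.not_mem_nil, or_false] at hw
      rcases hw with rfl | rfl | rfl | rfl | rfl | rfl
      exacts [hτz, ty1, ty2, ta, tb, tc])
  intro d
  exact hfr d z (by simp)

lemma hexLR (σ0 : Config) (k : ℕ) (hk : ¬ Even k) (i j : ℤ) (hev : Even (i + j)) (v : Bool)
    (hσz : evolve σ0 k (i, j) = !v)
    (hv1 : evolve σ0 k (i - 1, j) = v) (hv2 : evolve σ0 k (i + 1, j) = v)
    (hτz : evolve σ0 (k + 1) (i, j) = v) :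
    ∀ d, evolve σ0 (k + 1 + d) (i, j) = v := by
  have e0 : (i + j) % 2 = 0 := Int.even_iff.mp hev
  have pA1 : ¬ Even ((i - 1) + j) := by rw [Int.even_iff]; omega
  have pA2 : ¬ Even ((i + 1) + j) := by rw [Int.even_iff]; omega
  have pAc : ¬ Even (i + (j - 1)) := by rw [Int.even_iff]; omega
  have pBa : Even ((i - 1) + (j - 1)) := by rw [Int.even_iff]; omega
  have pBb : Even ((i + 1) + (j - 1)) := by rw [Int.even_iff]; omega
  refine hexcase σ0 k hk (i, j) (i - 1, j) (i + 1, j) (i - 1, j - 1) (i + 1, j - 1) (i, j - 1) v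
    pA1 pA2 pAc pBa pBb
    ?_ ?_ ?_ ?_ ?_ ?_ ?_ ?_ ?_ ?_ ?_ ?_ ?_ ?_ ?_ ?_ ?_ ?_ hσz hv1 hv2 hτz <;>
  first
    | (simp [nbrs, hev, pA1, pA2, pAc, pBa, pBb, Prod.ext_iff] <;> omega)
    | (simp only [ne_eq, Prod.mk.injEq, not_and] <;> intros <;> omega)

lemma hexLU (σ0 : Config) (k : ℕ) (hk : ¬ Even k) (i j : ℤ) (hev : Even (i + j)) (v : Bool)
    (hσz : evolve σ0 k (i, j) = !v)
    (hv1 : evolve σ0 k (i - 1, j) = v) (hv2 : evolve σ0 k (i, j + 1) = v)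
    (hτz : evolve σ0 (k + 1) (i, j) = v) :
    ∀ d, evolve σ0 (k + 1 + d) (i, j) = v := by
  have e0 : (i + j) % 2 = 0 := Int.even_iff.mp hev
  have pA1 : ¬ Even ((i - 1) + j) := by rw [Int.even_iff]; omega
  have pA2 : ¬ Even (i + (j + 1)) := by rw [Int.even_iff]; omega
  have pAc : ¬ Even ((i - 2) + (j + 1)) := by rw [Int.even_iff]; omega
  have pBa : Even ((i - 2) + j) := by rw [Int.even_iff]; omega
  have pBb : Even ((i - 1) + (j + 1)) := by rw [Int.even_iff]; omega
  refine hexcase σ0 k hk (i, j) (i - 1, j) (i, j + 1) (i - 2, j) (i - 1, j + 1) (i - 2, j + 1) v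
    pA1 pA2 pAc pBa pBb
    ?_ ?_ ?_ ?_ ?_ ?_ ?_ ?_ ?_ ?_ ?_ ?_ ?_ ?_ ?_ ?_ ?_ ?_ hσz hv1 hv2 hτz <;>
  first
    | (simp [nbrs, hev, pA1, pA2, pAc, pBa, pBb, Prod.ext_iff] <;> omega)
    | (simp only [ne_eq, Prod.mk.injEq, not_and] <;> intros <;> omega)

lemma hexRU (σ0 : Config) (k : ℕ) (hk : ¬ Even k) (i j : ℤ) (hev : Even (i + j)) (v : Bool)
    (hσz : evolve σ0 k (i, j) = !v)
    (hv1 : evolve σ0 k (i + 1, j) = v) (hv2 : evolve σ0 k (i, j + 1) = v)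
    (hτz : evolve σ0 (k + 1) (i, j) = v) :
    ∀ d, evolve σ0 (k + 1 + d) (i, j) = v := by
  have e0 : (i + j) % 2 = 0 := Int.even_iff.mp hev
  have pA1 : ¬ Even ((i + 1) + j) := by rw [Int.even_iff]; omega
  have pA2 : ¬ Even (i + (j + 1)) := by rw [Int.even_iff]; omega
  have pAc : ¬ Even ((i + 2) + (j + 1)) := by rw [Int.even_iff]; omega
  have pBa : Even ((i + 2) + j) := by rw [Int.even_iff]; omega
  have pBb : Even ((i + 1) + (j + 1)) := by rw [Int.even_iff]; omega
  refine hexcase σ0 k hk (i, j) (i + 1, j) (i, j + 1) (i + 2, j) (i + 1, j + 1) (i + 2, j + 1) v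
    pA1 pA2 pAc pBa pBb
    ?_ ?_ ?_ ?_ ?_ ?_ ?_ ?_ ?_ ?_ ?_ ?_ ?_ ?_ ?_ ?_ ?_ ?_ hσz hv1 hv2 hτz <;>
  first
    | (simp [nbrs, hev, pA1, pA2, pAc, pBa, pBb, Prod.ext_iff] <;> omega)
    | (simp only [ne_eq, Prod.mk.injEq, not_and] <;> intros <;> omega)

/-- If a site of the even sublattice flips at (necessarily odd) step `k`, then it keeps
its new value forever. -/
lemma flip_freeze (σ0 : Config) (k : ℕ) (hk : ¬ Even k) {x : Site} (hx : Even (x.1 + x.2))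
    (hflip : evolve σ0 (k + 1) x ≠ evolve σ0 k x) :
    ∀ d, evolve σ0 (k + 1 + d) x = evolve σ0 (k + 1) x := by
  obtain ⟨i, j⟩ := x
  have hev : Even (i + j) := hx
  have hupd : evolve σ0 (k + 1) (i, j) = maj (evolve σ0 k) (i, j) :=
    step_upd (Or.inr ⟨hk, hev⟩)
  set v := maj (evolve σ0 k) (i, j) with hv
  have hσz : evolve σ0 k (i, j) = !v := by
    have hne : evolve σ0 k (i, j) ≠ v := fun h => hflip (hupd.trans h.symm)
    revert hne; cases evolve σ0 k (i, j) <;> cases v <;> simp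
  obtain ⟨w1, w2, m1, m2, hnw, e1, e2⟩ := exists_two (evolve σ0 k) (i, j)
  rw [← hv] at e1 e2
  simp only [nbrs, hev, if_true, List.mem_cons, List.not_mem_nil, or_false] at m1 m2
  have main : ∀ d, evolve σ0 (k + 1 + d) (i, j) = v := by
    rcases m1 with rfl | rfl | rfl <;> rcases m2 with rfl | rfl | rfl
    · exact absurd rfl hnw
    · exact hexLR σ0 k hk i j hev v hσz e1 e2 hupd
    · exact hexLU σ0 k hk i j hev v hσz e1 e2 hupd
    · exact hexLR σ0 k hk i j hev v hσz e2 e1 hupd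
    · exact absurd rfl hnw
    · exact hexRU σ0 k hk i j hev v hσz e1 e2 hupd
    · exact hexLU σ0 k hk i j hev v hσz e2 e1 hupd
    · exact hexRU σ0 k hk i j hev v hσz e2 e1 hupd
    · exact absurd rfl hnw
  intro d
  rw [hupd]
  exact main d

/-- under the synchronous dynamics, every site of the sublattice
`B = {(i,j) : i+j even}` flips at most once: there is at most one `n` with
σ^{n+1}_x ≠ σⁿ_x. -/
theorem stmt9 (σ0 : Config) (x : Site) (hx : Even (x.1 + x.2)) :
    {n : ℕ | evolve σ0 (n + 1) x ≠ evolve σ0 n x}.Subsingleton := by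
  have key : ∀ n m : ℕ, n < m → evolve σ0 (n + 1) x ≠ evolve σ0 n x →
      evolve σ0 (m + 1) x ≠ evolve σ0 m x → False := by
    intro n m hlt hn hm
    have hodd : ¬ Even n := fun he =>
      hn (step_noupd (by rintro (⟨_, hh⟩ | ⟨hh, _⟩); exact hh hx; exact hh he))
    have hfr := flip_freeze σ0 n hodd hx hn
    have h1 : evolve σ0 (m + 1) x = evolve σ0 (n + 1) x := by
      have hh : m + 1 = n + 1 + (m - n) := by omega
      rw [hh]; exact hfr _
    have h2 : evolve σ0 m x = evolve σ0 (n + 1) x := by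
      have hh : m = n + 1 + (m - n - 1) := by omega
      rw [hh]; exact hfr _
    exact hm (h1.trans h2.symm)
  intro n hn m hm
  simp only [Set.mem_setOf_eq] at hn hm
  rcases lt_trichotomy n m with h | h | h
  · exact absurd (key n m h hn hm) not_false
  · exact h
  · exact absurd (key m n h hm hn) not_false
end

section
/- Under the synchronous dynamics on the hexagonal lattice ℍ, let (y_0, y_1, …, y_n = y_0) be an s-loop in the sublattice B with associated distinct A-sites ζ_1, …, ζ_n. If at some even time 2m every site y_i has spin +1 in σ^{2m}, then for every k ≥ 2m every site y_i has spin +1 in σ^k, and for every k ≥ 2m+1 every site ζ_i has spin +1 in σ^k. The same holds with +1 replaced throughout by −1. -/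
open MeasureTheory ENNReal

/-- Two sites are B-neighbors (adjacent in the triangular lattice on a sublattice of ℍ) if
they are distinct and at graph distance 2 in ℍ, i.e. have a common ℍ-neighbor. -/
def BAdj (y y' : Site) : Prop := y ≠ y' ∧ ∃ z, Adj y z ∧ Adj y' z

/-- `(c, ζ)` is an s-loop in the triangular sublattice `B = {(i,j) : i+j even}`: a cyclic
sequence `c` of `n ≥ 3` distinct sites of `B`, consecutive sites B-neighbors, such that the
associated A-sites `ζ i` (the common ℍ-neighbor of `c i` and `c (i+1)`) are all distinct. -/
def IsSLoop (n : ℕ) (c : ZMod n → Site) (ζ : ZMod n → Site) : Prop :=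
  3 ≤ n ∧ Function.Injective c ∧ (∀ i, Even ((c i).1 + (c i).2)) ∧
  (∀ i, BAdj (c i) (c (i + 1))) ∧
  (∀ i, Adj (c i) (ζ i) ∧ Adj (c (i + 1)) (ζ i)) ∧
  Function.Injective ζ

lemma adj_parity {x y : Site} (h : Adj x y) (hx : Even (x.1 + x.2)) :
    ¬ Even (y.1 + y.2) := by
  unfold Adj nbrs at h
  split_ifs at h with hc <;>
    simp only [List.mem_cons, List.not_mem_nil, or_false] at h <;>
    rcases h with h | h | h <;> subst h <;>
    simp only [Int.even_iff] at hx ⊢ <;> omega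

lemma maj_of_two (σ : Config) (x y₁ y₂ : Site) (h₁ : Adj x y₁) (h₂ : Adj x y₂)
    (hne : y₁ ≠ y₂) (s : Bool) (e₁ : σ y₁ = s) (e₂ : σ y₂ = s) : maj σ x = s := by
  unfold Adj nbrs at h₁ h₂
  unfold maj nbrs
  split_ifs at h₁ h₂ ⊢ with hc
  all_goals
    simp only [List.mem_cons, List.not_mem_nil, or_false] at h₁ h₂
  all_goals
    rcases h₁ with h₁ | h₁ | h₁ <;> rcases h₂ with h₂ | h₂ | h₂ <;>
      (try (exfalso; exact hne (h₁.trans h₂.symm))) <;>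
      subst h₁ <;> subst h₂ <;>
      simp only [List.countP_cons, List.countP_nil, e₁, e₂] <;>
      cases s <;> simp_all <;> split <;> simp_all

/-- if all sites of an s-loop in `B` carry the spin value `s` at some even
time `2m` of the synchronous dynamics, then they carry the value `s` at all times `k ≥ 2m`,
and the associated A-sites `ζ i` carry the value `s` at all times `k ≥ 2m + 1`.  (Taking
`s = true` gives the +1 statement, `s = false` the −1 statement.) -/
theorem stmt10 (σ0 : Config) (n : ℕ) (c ζ : ZMod n → Site) (hloop : IsSLoop n c ζ)
    (m : ℕ) (s : Bool) (hinit : ∀ i, evolve σ0 (2 * m) (c i) = s) :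
    (∀ k : ℕ, 2 * m ≤ k → ∀ i, evolve σ0 k (c i) = s) ∧
    (∀ k : ℕ, 2 * m + 1 ≤ k → ∀ i, evolve σ0 k (ζ i) = s) := by
  obtain ⟨hn, hcinj, hB, hbadj, hζadj, hζinj⟩ := hloop
  haveI : Fact (1 < n) := ⟨by omega⟩
  have hone : (1 : ZMod n) ≠ 0 := one_ne_zero
  have hζA : ∀ i, ¬ Even ((ζ i).1 + (ζ i).2) := fun i =>
    adj_parity (hζadj i).1 (hB i)
  have main : ∀ j : ℕ, (∀ i, evolve σ0 (2 * m + j) (c i) = s) ∧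
      (1 ≤ j → ∀ i, evolve σ0 (2 * m + j) (ζ i) = s) := by
    intro j
    induction j with
    | zero => exact ⟨hinit, by omega⟩
    | succ j ih =>
      have hev : evolve σ0 (2 * m + (j + 1)) =
          syncStep (2 * m + j) (evolve σ0 (2 * m + j)) := rfl
      by_cases hpar : Even (2 * m + j)
      · constructor
        · intro i
          rw [hev]
          unfold syncStep
          rw [if_neg (by simp [hpar, hB i])]
          exact ih.1 i
        · intro _ i
          rw [hev]
          unfold syncStep
          rw [if_pos (Or.inl ⟨hpar, hζA i⟩)]
          exact maj_of_two _ _ _ _ (adj_symm (hζadj i).1) (adj_symm (hζadj i).2)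
            (hbadj i).1 s (ih.1 i) (ih.1 (i + 1))
      · have hj : 1 ≤ j := by
          rcases Nat.eq_zero_or_pos j with h | h
          · exfalso; exact hpar (by simpa [h] using even_two_mul m)
          · exact h
        constructor
        · intro i
          rw [hev]
          unfold syncStep
          rw [if_pos (Or.inr ⟨hpar, hB i⟩)]
          have h1 : Adj (c i) (ζ i) := (hζadj i).1
          have h2 : Adj (c i) (ζ (i - 1)) := by
            have := (hζadj (i - 1)).2
            rwa [sub_add_cancel] at this
          have hne : ζ i ≠ ζ (i - 1) := fun h => by
            have h' := hζinj h
            exact hone (by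
              calc (1 : ZMod n) = i - (i - 1) := (sub_sub_cancel i 1).symm
                _ = i - i := by rw [← h']
                _ = 0 := sub_self i)
          exact maj_of_two _ _ _ _ h1 h2 hne s (ih.2 hj i) (ih.2 hj (i - 1))
        · intro _ i
          rw [hev]
          unfold syncStep
          rw [if_neg (by simp [hpar, hζA i])]
          exact ih.2 hj i
  constructor
  · intro k hk i
    have : k = 2 * m + (k - 2 * m) := by omega
    rw [this]; exact (main _).1 i
  · intro k hk i
    have : k = 2 * m + (k - 2 * m) := by omega
    rw [this]; exact (main _).2 (by omega) i
end

section
/- In the disordered ferromagnet on the hexagonal lattice ℍ with couplings satisfying J_{x,y} ∈ [0,1] for every edge and external field h > 1.5, for any configuration σ: (i) if flipping at a site x is legal in σ, σ_x = +1, and some neighbor y of x has σ_y = +1, then J_{x,y} < 1/2 and the other two neighbors of x have spin −1 in σ; (ii) if J_{x,y} < 1/2 for neighbors x, y with σ_x = −1 and σ_y = +1, and flipping at y is legal in σ, then the other two neighbors of y have spin −1 in σ (so that at such a flip all three neighbors of y already have spin −1). -/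
open MeasureTheory ENNReal

/-- The spin value of a site as a real number: `true` ↦ +1, `false` ↦ −1. -/
def val (b : Bool) : ℝ := if b then 1 else -1

/-- The energy change of a flip at `x` for the Hamiltonian with couplings `J` and external
field `h`:  ΔH_x(σ) = 2 Σ_{y∈N(x)} J_{x,y} σ_x σ_y + 2 h σ_x. -/
def deltaH (J : Site → Site → ℝ) (h : ℝ) (σ : Config) (x : Site) : ℝ :=
  2 * ((nbrs x).map (fun y => J x y * val (σ x) * val (σ y))).sum + 2 * h * val (σ x)

/-- Flipping at `x` is legal in the disordered model iff it strictly lowers the energy. -/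
def LegalDis (J : Site → Site → ℝ) (h : ℝ) (σ : Config) (x : Site) : Prop :=
  deltaH J h σ x < 0

/-- `η 0, η 1, …` is a legal flip sequence of the zero-temperature dynamics of the
disordered model, of length `m ∈ ℕ∞` (`m = ⊤` for an infinite sequence): each configuration
is obtained from the previous one by a single legal flip. -/
def IsLegalFlipSeqDis (J : Site → Site → ℝ) (h : ℝ) (η : ℕ → Config) (m : ℕ∞) : Prop :=
  ∀ n : ℕ, (n : ℕ∞) + 1 ≤ m → ∃ x, LegalDis J h (η n) x ∧ η (n + 1) = flipAt (η n) x

lemma mem_nbrs_symm {x y : Site} (hm : y ∈ nbrs x) : x ∈ nbrs y := by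
  obtain ⟨i, j⟩ := x
  obtain ⟨a, b⟩ := y
  simp only [nbrs, List.mem_cons, List.not_mem_nil, or_false, Int.even_iff] at hm ⊢
  split_ifs at hm ⊢ <;> simp only [Prod.mk.injEq] at hm ⊢ <;> omega

lemma sum_lt {J : Site → Site → ℝ} {h : ℝ} {σ : Config} {x : Site}
    (hx : σ x = true) (hleg : LegalDis J h σ x) :
    ((nbrs x).map (fun y => J x y * val (σ y))).sum < -h := by
  unfold LegalDis deltaH at hleg
  have hv : val (σ x) = 1 := by simp [val, hx]
  simp only [hv, mul_one] at hleg
  linarith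

lemma keyA {j1 j2 j3 h : ℝ} (h10 : 0 ≤ j1) (h20 : 0 ≤ j2) (h30 : 0 ≤ j3)
    (h21 : j2 ≤ 1) (h31 : j3 ≤ 1) (hh : 1.5 < h) {s2 s3 : Bool}
    (hsum : j1 + (j2 * val s2 + j3 * val s3) < -h) :
    j1 < 1 / 2 ∧ s2 = false ∧ s3 = false := by
  cases s2 with
  | true => exfalso; cases s3 <;> simp [val] at hsum <;> linarith
  | false =>
    cases s3 with
    | true => exfalso; simp [val] at hsum; linarith
    | false =>
      simp [val] at hsum
      exact ⟨by linarith, rfl, rfl⟩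

lemma keyB {j1 j2 j3 h : ℝ} (h20 : 0 ≤ j2) (h30 : 0 ≤ j3)
    (h21 : j2 ≤ 1) (h31 : j3 ≤ 1) (hj1 : j1 < 1 / 2) (hh : 1.5 < h) {s2 s3 : Bool}
    (hsum : -j1 + (j2 * val s2 + j3 * val s3) < -h) :
    s2 = false ∧ s3 = false := by
  cases s2 with
  | true => exfalso; cases s3 <;> simp [val] at hsum <;> linarith
  | false =>
    cases s3 with
    | true => exfalso; simp [val] at hsum; linarith
    | false => exact ⟨rfl, rfl⟩

/-- in the disordered ferromagnet on ℍ with couplings in [0,1] and field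
h > 1.5:
(i) if a flip at `x` is legal, `σ x = +1`, and a neighbor `y` of `x` has `σ y = +1`, then
`J x y < 1/2` and the other two neighbors of `x` have spin −1;
(ii) if `J x y < 1/2` for neighbors `x, y` with `σ x = −1`, `σ y = +1`, and a flip at `y`
is legal, then the other two neighbors of `y` have spin −1 (so all three neighbors of `y`
have spin −1). -/
theorem stmt15 (J : Site → Site → ℝ) (hsym : ∀ a b : Site, J a b = J b a)
    (hJ : ∀ a b : Site, Adj a b → J a b ∈ Set.Icc (0 : ℝ) 1)
    (h : ℝ) (hh : 1.5 < h) (σ : Config) :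
    (∀ x y : Site, LegalDis J h σ x → σ x = true → y ∈ nbrs x → σ y = true →
      J x y < 1 / 2 ∧ ∀ z ∈ nbrs x, z ≠ y → σ z = false) ∧
    (∀ x y : Site, y ∈ nbrs x → J x y < 1 / 2 → σ x = false → σ y = true →
      LegalDis J h σ y →
        (∀ z ∈ nbrs y, z ≠ x → σ z = false) ∧ (∀ z ∈ nbrs y, σ z = false)) := by
  constructor
  · intro x y hleg hx hy hyt
    have hs := sum_lt hx hleg
    obtain ⟨a, b, c, hn⟩ : ∃ a b c, nbrs x = [a, b, c] := ⟨_, _, _, rfl⟩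
    have hJa := hJ x a (show a ∈ nbrs x by rw [hn]; simp)
    have hJb := hJ x b (show b ∈ nbrs x by rw [hn]; simp)
    have hJc := hJ x c (show c ∈ nbrs x by rw [hn]; simp)
    rw [hn] at hs hy ⊢
    simp only [List.map_cons, List.map_nil, List.sum_cons, List.sum_nil, add_zero] at hs
    simp only [List.mem_cons, List.not_mem_nil, or_false] at hy
    rcases hy with rfl | rfl | rfl
    · have hva : val (σ y) = 1 := by simp [val, hyt]
      obtain ⟨h1, h2, h3⟩ := keyA hJa.1 hJb.1 hJc.1 hJb.2 hJc.2 hh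
        (show J x y + (J x b * val (σ b) + J x c * val (σ c)) < -h by
          rw [hva] at hs; linarith)
      refine ⟨h1, ?_⟩
      intro z hz hne
      simp only [List.mem_cons, List.not_mem_nil, or_false] at hz
      rcases hz with rfl | rfl | rfl
      · exact absurd rfl hne
      · exact h2
      · exact h3
    · have hvb : val (σ y) = 1 := by simp [val, hyt]
      obtain ⟨h1, h2, h3⟩ := keyA hJb.1 hJa.1 hJc.1 hJa.2 hJc.2 hh
        (show J x y + (J x a * val (σ a) + J x c * val (σ c)) < -h by
          rw [hvb] at hs; linarith)
      refine ⟨h1, ?_⟩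
      intro z hz hne
      simp only [List.mem_cons, List.not_mem_nil, or_false] at hz
      rcases hz with rfl | rfl | rfl
      · exact h2
      · exact absurd rfl hne
      · exact h3
    · have hvc : val (σ y) = 1 := by simp [val, hyt]
      obtain ⟨h1, h2, h3⟩ := keyA hJc.1 hJa.1 hJb.1 hJa.2 hJb.2 hh
        (show J x y + (J x a * val (σ a) + J x b * val (σ b)) < -h by
          rw [hvc] at hs; linarith)
      refine ⟨h1, ?_⟩
      intro z hz hne
      simp only [List.mem_cons, List.not_mem_nil, or_false] at hz
      rcases hz with rfl | rfl | rfl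
      · exact h2
      · exact h3
      · exact absurd rfl hne
  · intro x y hy hJxy hx hyt hleg
    have hs := sum_lt hyt hleg
    have hxy := mem_nbrs_symm hy
    obtain ⟨a, b, c, hn⟩ : ∃ a b c, nbrs y = [a, b, c] := ⟨_, _, _, rfl⟩
    have hJa := hJ y a (show a ∈ nbrs y by rw [hn]; simp)
    have hJb := hJ y b (show b ∈ nbrs y by rw [hn]; simp)
    have hJc := hJ y c (show c ∈ nbrs y by rw [hn]; simp)
    have hJyx : J y x < 1 / 2 := by rw [hsym y x]; exact hJxy
    rw [hn] at hs hxy ⊢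
    simp only [List.map_cons, List.map_nil, List.sum_cons, List.sum_nil, add_zero] at hs
    simp only [List.mem_cons, List.not_mem_nil, or_false] at hxy
    rcases hxy with rfl | rfl | rfl
    · have hva : val (σ x) = -1 := by simp [val, hx]
      obtain ⟨h2, h3⟩ := keyB hJb.1 hJc.1 hJb.2 hJc.2 hJyx hh
        (show -J y x + (J y b * val (σ b) + J y c * val (σ c)) < -h by
          rw [hva] at hs; linarith)
      constructor
      · intro z hz hne
        simp only [List.mem_cons, List.not_mem_nil, or_false] at hz
        rcases hz with rfl | rfl | rfl
        · exact absurd rfl hne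
        · exact h2
        · exact h3
      · intro z hz
        simp only [List.mem_cons, List.not_mem_nil, or_false] at hz
        rcases hz with rfl | rfl | rfl
        · exact hx
        · exact h2
        · exact h3
    · have hvb : val (σ x) = -1 := by simp [val, hx]
      obtain ⟨h2, h3⟩ := keyB hJa.1 hJc.1 hJa.2 hJc.2 hJyx hh
        (show -J y x + (J y a * val (σ a) + J y c * val (σ c)) < -h by
          rw [hvb] at hs; linarith)
      constructor
      · intro z hz hne
        simp only [List.mem_cons, List.not_mem_nil, or_false] at hz
        rcases hz with rfl | rfl | rfl
        · exact h2
        · exact absurd rfl hne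
        · exact h3
      · intro z hz
        simp only [List.mem_cons, List.not_mem_nil, or_false] at hz
        rcases hz with rfl | rfl | rfl
        · exact h2
        · exact hx
        · exact h3
    · have hvc : val (σ x) = -1 := by simp [val, hx]
      obtain ⟨h2, h3⟩ := keyB hJa.1 hJb.1 hJa.2 hJb.2 hJyx hh
        (show -J y x + (J y a * val (σ a) + J y b * val (σ b)) < -h by
          rw [hvc] at hs; linarith)
      constructor
      · intro z hz hne
        simp only [List.mem_cons, List.not_mem_nil, or_false] at hz
        rcases hz with rfl | rfl | rfl
        · exact h2
        · exact h3
        · exact absurd rfl hne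
      · intro z hz
        simp only [List.mem_cons, List.not_mem_nil, or_false] at hz
        rcases hz with rfl | rfl | rfl
        · exact h2
        · exact h3
        · exact hx
end
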